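/- arXiv:1112.2420 — 11 statements merged into one kernel-verified Lean document; each statement's English description precedes it below -/
import Mathlib

section
/- Let P : ℝ² → Matrix (Fin N) (Fin N) ℂ be twice continuously differentiable with P² = P at every point, and let λ ∈ ℂ with λ ∉ {0, 1, −1}. Define U¹ = (2/(1+λ))[∂₊P, P] and U² = (2/(1−λ))[∂₋P, P]. Then at every point the zero-curvature condition ∂₋U¹ − ∂₊U² + [U¹, U²] = 0 holds if and only if the Euler–Lagrange equation [∂₊∂₋P, P] = 0 holds. -/
/-!
Write `A = ∂₊P`, `B = ∂₋P` and `S = ∂₊∂₋P`, which equals `∂₋∂₊P` by symmetry of the second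
derivative. Differentiating `P² = P` gives `AP + PA = A` and `BP + PB = B`, and for such `A`, `B`
one has `[[A, P], [B, P]] = -[A, B]`. With `a = 2/(1+λ)` and `b = 2/(1-λ)` the Leibniz rule gives
`∂₋U¹ = a([S, P] + [A, B])` and `∂₊U² = b([S, P] + [B, A])`, so the curvature is
`(a - b)[S, P] + (a + b - ab)[A, B]`. Since `ab = a + b` and `a - b = -4λ/(1-λ²) ≠ 0`, it vanishes
exactly when `[S, P] = 0`.
-/

open Matrix

noncomputable section

attribute [local instance] Matrix.normedAddCommGroup Matrix.normedSpace

/-- The Wirtinger derivative `∂₊ = ½(∂/∂x − i ∂/∂y)` of a matrix-valued map on `ℝ²`. -/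
def dp {N : ℕ} (P : ℝ × ℝ → Matrix (Fin N) (Fin N) ℂ) (p : ℝ × ℝ) :
    Matrix (Fin N) (Fin N) ℂ :=
  (2 : ℂ)⁻¹ • (fderiv ℝ P p (1, 0) - Complex.I • fderiv ℝ P p (0, 1))

/-- The Wirtinger derivative `∂₋ = ½(∂/∂x + i ∂/∂y)` of a matrix-valued map on `ℝ²`. -/
def dm {N : ℕ} (P : ℝ × ℝ → Matrix (Fin N) (Fin N) ℂ) (p : ℝ × ℝ) :
    Matrix (Fin N) (Fin N) ℂ :=
  (2 : ℂ)⁻¹ • (fderiv ℝ P p (1, 0) + Complex.I • fderiv ℝ P p (0, 1))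

/-- `fderiv` on matrices elaborates with the product topology `Matrix.topologicalSpace`, while the
calculus lemmas use the topology of the local norm. The two agree only up to unfolding, so where
we do calculus the latter is made the instance and those lemmas rewrite syntactically. -/
abbrev matrixNormTopology (m n : Type*) [Fintype m] [Fintype n] :
    TopologicalSpace (Matrix m n ℂ) :=
  PseudoMetricSpace.toUniformSpace.toTopologicalSpace

section
attribute [local instance] matrixNormTopology

variable {l m n : Type*} [Fintype l] [Fintype m] [Fintype n]

def Matrix.mulCLM : Matrix l m ℂ →L[ℝ] Matrix m n ℂ →L[ℝ] Matrix l n ℂ :=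
  (mulLinearMap ℝ).toContinuousBilinearMap

section
variable {F : ℝ × ℝ → Matrix l m ℂ} {G : ℝ × ℝ → Matrix m n ℂ} {p : ℝ × ℝ}

theorem DifferentiableAt.matrix_mul (hF : DifferentiableAt ℝ F p)
    (hG : DifferentiableAt ℝ G p) : DifferentiableAt ℝ (fun q => F q * G q) p :=
  (Matrix.mulCLM.hasFDerivAt_of_bilinear hF.hasFDerivAt hG.hasFDerivAt).differentiableAt

theorem fderiv_matrix_mul_apply (hF : DifferentiableAt ℝ F p)
    (hG : DifferentiableAt ℝ G p) (v : ℝ × ℝ) :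
    fderiv ℝ (fun q => F q * G q) p v = fderiv ℝ F p v * G p + F p * fderiv ℝ G p v := by
  have h : HasFDerivAt (fun q => F q * G q) _ p :=
    Matrix.mulCLM.hasFDerivAt_of_bilinear hF.hasFDerivAt hG.hasFDerivAt
  rw [h.fderiv]
  exact add_comm _ _
end

def wirtinger (s : ℂ) (F : ℝ × ℝ → Matrix m n ℂ) (p : ℝ × ℝ) : Matrix m n ℂ :=
  (2 : ℂ)⁻¹ • (fderiv ℝ F p (1, 0) + s • fderiv ℝ F p (0, 1))

theorem dp_eq_wirtinger {N : ℕ} : @dp N = wirtinger (-Complex.I) := by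
  ext P p : 2
  change (2 : ℂ)⁻¹ • (fderiv ℝ P p (1, 0) - Complex.I • fderiv ℝ P p (0, 1)) = _
  rw [wirtinger, neg_smul, sub_eq_add_neg]

theorem dm_eq_wirtinger {N : ℕ} : @dm N = wirtinger Complex.I := rfl

section
variable {s : ℂ} {p : ℝ × ℝ}

theorem wirtinger_mul {F : ℝ × ℝ → Matrix l m ℂ} {G : ℝ × ℝ → Matrix m n ℂ}
    (hF : DifferentiableAt ℝ F p) (hG : DifferentiableAt ℝ G p) :
    wirtinger s (fun q => F q * G q) p = wirtinger s F p * G p + F p * wirtinger s G p := by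
  simp only [wirtinger, fderiv_matrix_mul_apply hF hG, Matrix.smul_mul, Matrix.mul_smul,
    Matrix.add_mul, Matrix.mul_add]
  module

theorem wirtinger_sub {F G : ℝ × ℝ → Matrix m n ℂ}
    (hF : DifferentiableAt ℝ F p) (hG : DifferentiableAt ℝ G p) :
    wirtinger s (fun q => F q - G q) p = wirtinger s F p - wirtinger s G p := by
  simp only [wirtinger, fderiv_fun_sub hF hG, _root_.sub_apply]
  module

theorem wirtinger_const_smul {F : ℝ × ℝ → Matrix m n ℂ} (c : ℂ)
    (hF : DifferentiableAt ℝ F p) :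
    wirtinger s (fun q => c • F q) p = c • wirtinger s F p := by
  simp only [wirtinger, fderiv_fun_const_smul hF, _root_.smul_apply]
  module

theorem wirtinger_smul_commutator {F G : ℝ × ℝ → Matrix n n ℂ} (c : ℂ)
    (hF : DifferentiableAt ℝ F p) (hG : DifferentiableAt ℝ G p) :
    wirtinger s (fun q => c • (F q * G q - G q * F q)) p =
      c • ((wirtinger s F p * G p - G p * wirtinger s F p) +
        (F p * wirtinger s G p - wirtinger s G p * F p)) := by
  have hFG := hF.matrix_mul hG
  have hGF := hG.matrix_mul hF
  rw [wirtinger_const_smul c (hFG.fun_sub hGF), wirtinger_sub hFG hGF, wirtinger_mul hF hG,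
    wirtinger_mul hG hF]
  abel_nf

theorem hasFDerivAt_wirtinger {F : ℝ × ℝ → Matrix m n ℂ}
    {D : ℝ × ℝ →L[ℝ] ℝ × ℝ →L[ℝ] Matrix m n ℂ} (hF : HasFDerivAt (fderiv ℝ F) D p) :
    HasFDerivAt (wirtinger s F) ((2 : ℂ)⁻¹ • (D.flip (1, 0) + s • D.flip (0, 1))) p := by
  refine (((hF.clm_apply (hasFDerivAt_const (1, 0) p)).fun_add
    ((hF.clm_apply (hasFDerivAt_const (0, 1) p)).fun_const_smul s)).fun_const_smul
      (2 : ℂ)⁻¹).congr_fderiv ?_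
  simp

theorem wirtinger_wirtinger_comm {F : ℝ × ℝ → Matrix m n ℂ} (t : ℂ)
    (hF : ContDiffAt ℝ 2 F p) :
    wirtinger s (wirtinger t F) p = wirtinger t (wirtinger s F) p := by
  have hD := ((hF.fderiv_right (m := 1) le_rfl).differentiableAt one_ne_zero).hasFDerivAt
  have hsymm := hF.isSymmSndFDerivAt (by simp) (1, 0) (0, 1)
  simp only [wirtinger, (hasFDerivAt_wirtinger (s := s) hD).fderiv,
    (hasFDerivAt_wirtinger (s := t) hD).fderiv, _root_.smul_apply, _root_.add_apply,
    ContinuousLinearMap.flip_apply, hsymm]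
  module

theorem wirtinger_mul_add_mul_wirtinger_of_isIdempotentElem {P : ℝ × ℝ → Matrix n n ℂ}
    (hP : DifferentiableAt ℝ P p) (hidem : ∀ q, IsIdempotentElem (P q)) :
    wirtinger s P p * P p + P p * wirtinger s P p = wirtinger s P p := by
  rw [← wirtinger_mul hP hP, funext fun q => (hidem q).eq]
end
end

theorem commutator_commutator_of_isIdempotentElem {R : Type*} [Ring R] {Q A B : R}
    (hQ : IsIdempotentElem Q) (hA : A * Q + Q * A = A) (hB : B * Q + Q * B = B) :
    (A * Q - Q * A) * (B * Q - Q * B) - (B * Q - Q * B) * (A * Q - Q * A) = -(A * B - B * A) := by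
  have hQA : Q * A = A - A * Q := eq_sub_of_add_eq' hA
  have hQB : Q * B = B - B * Q := eq_sub_of_add_eq' hB
  have hQAX : ∀ X : R, Q * (A * X) = A * X - A * (Q * X) := fun X => by
    rw [← mul_assoc, hQA, sub_mul, mul_assoc]
  have hQBX : ∀ X : R, Q * (B * X) = B * X - B * (Q * X) := fun X => by
    rw [← mul_assoc, hQB, sub_mul, mul_assoc]
  simp only [mul_sub, sub_mul, mul_assoc, hQAX, hQBX, hQA, hQB, hQ.eq]
  abel

theorem curvature_eq_smul_commutator {R : Type*} [Ring R] [Module ℂ R] [IsScalarTower ℂ R R]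
    [SMulCommClass ℂ R R] {Q A B S : R} {a b : ℂ} (hQ : IsIdempotentElem Q)
    (hA : A * Q + Q * A = A) (hB : B * Q + Q * B = B) (hab : a * b = a + b) :
    a • ((S * Q - Q * S) + (A * B - B * A)) - b • ((S * Q - Q * S) + (B * A - A * B)) +
        ((a • (A * Q - Q * A)) * (b • (B * Q - Q * B)) -
          (b • (B * Q - Q * B)) * (a • (A * Q - Q * A))) =
      (a - b) • (S * Q - Q * S) := by
  rw [smul_mul_smul_comm, smul_mul_smul_comm, mul_comm b a, ← smul_sub,
    commutator_commutator_of_isIdempotentElem hQ hA hB, hab]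
  module

/-- For an idempotent-valued `C²` map `P` and `λ ∉ {0, 1, −1}`, with
`U¹ = (2/(1+λ))[∂₊P, P]` and `U² = (2/(1−λ))[∂₋P, P]`, the zero-curvature condition
`∂₋U¹ − ∂₊U² + [U¹, U²] = 0` holds at a point iff the Euler–Lagrange equation
`[∂₊∂₋P, P] = 0` holds there. -/
theorem zero_curvature_iff_EL {N : ℕ} (P : ℝ × ℝ → Matrix (Fin N) (Fin N) ℂ)
    (hP : ContDiff ℝ 2 P) (hproj : ∀ p, P p * P p = P p)
    (lam : ℂ) (h0 : lam ≠ 0) (h1 : lam ≠ 1) (h2 : lam ≠ -1)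
    (U1 U2 : ℝ × ℝ → Matrix (Fin N) (Fin N) ℂ)
    (hU1 : U1 = fun p => (2 / (1 + lam)) • (dp P p * P p - P p * dp P p))
    (hU2 : U2 = fun p => (2 / (1 - lam)) • (dm P p * P p - P p * dm P p)) :
    ∀ p, (dm U1 p - dp U2 p + (U1 p * U2 p - U2 p * U1 p) = 0
      ↔ dp (fun q => dm P q) p * P p - P p * dp (fun q => dm P q) p = 0) := by
  intro p
  have hplus : (1 : ℂ) + lam ≠ 0 := fun h => h2 (by linear_combination h)
  have hminus : (1 : ℂ) - lam ≠ 0 := fun h => h1 (by linear_combination -h)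
  have hab : 2 / (1 + lam) * (2 / (1 - lam)) = 2 / (1 + lam) + 2 / (1 - lam) := by
    field_simp; ring
  have hab_ne : 2 / (1 + lam) - 2 / (1 - lam) ≠ 0 := by
    rw [div_sub_div _ _ hplus hminus]
    exact div_ne_zero (fun h => h0 (by linear_combination -h / 4)) (mul_ne_zero hplus hminus)
  have hPp : DifferentiableAt ℝ P p := hP.differentiable two_ne_zero p
  have hD : ∀ s, DifferentiableAt ℝ (wirtinger s P) p := fun s =>
    (hasFDerivAt_wirtinger
      ((hP.fderiv_right (m := 1) le_rfl).differentiable one_ne_zero p).hasFDerivAt).differentiableAt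
  have hA := wirtinger_mul_add_mul_wirtinger_of_isIdempotentElem (s := -Complex.I) hPp hproj
  have hB := wirtinger_mul_add_mul_wirtinger_of_isIdempotentElem (s := Complex.I) hPp hproj
  subst hU1 hU2
  simp only [dp_eq_wirtinger, dm_eq_wirtinger]
  rw [wirtinger_smul_commutator _ (hD _) hPp, wirtinger_smul_commutator _ (hD _) hPp,
    wirtinger_wirtinger_comm _ hP.contDiffAt,
    curvature_eq_smul_commutator (hproj p) hA hB hab, smul_eq_zero, or_iff_right hab_ne]
end
end

section
/- Let P : ℝ² → Matrix (Fin N) (Fin N) ℂ be continuously differentiable with P² = P at every point. Then at every point, trace([∂₊P, P]·[∂₋P, P]) = −trace(∂₊P·∂₋P). Consequently, with respect to the inner product (X,Y) = −½ trace(X·Y), the tangent vectors ∂₊F = −i[∂₊P, P] and ∂₋F = i[∂₋P, P] of the Generalized Weierstrass immersion satisfy (∂₊F, ∂₋F) = ½·trace(∂₊P·∂₋P), one half the Lagrangian density of the model. -/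
/-!
Differentiating `P² = P` gives `P·DP + DP·P = DP` for every directional derivative `DP`, hence
for `∂₊P` and `∂₋P`, which are complex combinations of `∂ₓP` and `∂ᵧP`. Any `X` with
`PX + XP = X` satisfies `PXP = 0` and `PX = X - XP`; expanding `[A, P][B, P]` with these
identities leaves `-A(PB + BP) = -AB`. The inner-product identity then follows from `(-i)·i = 1`.
-/

open Matrix

noncomputable section

attribute [local instance] Matrix.normedAddCommGroup Matrix.normedSpace

theorem ContinuousLinearMap.fderiv_apply_of_bilinear_idempotent {𝕜 E F : Type*}
    [NontriviallyNormedField 𝕜] [NormedAddCommGroup E] [NormedSpace 𝕜 E]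
    [NormedAddCommGroup F] [NormedSpace 𝕜 F] (B : F →L[𝕜] F →L[𝕜] F) {f : E → F} {x : E}
    (hf : DifferentiableAt 𝕜 f x) (hidem : ∀ y, B (f y) (f y) = f y) (v : E) :
    B (f x) (fderiv 𝕜 f x v) + B (fderiv 𝕜 f x v) (f x) = fderiv 𝕜 f x v := by
  have h := B.fderiv_of_bilinear hf hf
  simp only [hidem] at h
  exact (congrArg (· v) h).symm

/- With the entrywise sup norm, matrices are not a normed ring, so the product rule is taken from
the bilinear map `(X, Y) ↦ X * Y`, continuous by finite dimensionality. -/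
def matrixMulCLM (n : Type*) [Fintype n] : Matrix n n ℂ →L[ℝ] Matrix n n ℂ →L[ℝ] Matrix n n ℂ :=
  LinearMap.toContinuousLinearMap
    (LinearMap.toContinuousLinearMap.toLinearMap ∘ₗ LinearMap.mul ℝ _)

theorem fderiv_apply_anticomm_of_idempotent {E n : Type*} [NormedAddCommGroup E]
    [NormedSpace ℝ E] [Fintype n] {P : E → Matrix n n ℂ} {p : E} (hP : DifferentiableAt ℝ P p)
    (hproj : ∀ q, P q * P q = P q) (v : E) :
    P p * fderiv ℝ P p v + fderiv ℝ P p v * P p = fderiv ℝ P p v :=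
  (matrixMulCLM n).fderiv_apply_of_bilinear_idempotent hP hproj v

theorem mul_dp_add_dp_mul_of_idempotent {N : ℕ} {P : ℝ × ℝ → Matrix (Fin N) (Fin N) ℂ}
    {p : ℝ × ℝ} (hP : DifferentiableAt ℝ P p) (hproj : ∀ q, P q * P q = P q) :
    P p * dp P p + dp P p * P p = dp P p := by
  have hD := fderiv_apply_anticomm_of_idempotent hP hproj
  conv_rhs => rw [dp, ← hD (1, 0), ← hD (0, 1)]
  simp only [dp, mul_sub, sub_mul, mul_smul_comm, smul_mul_assoc, smul_sub, smul_add]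
  abel

theorem mul_dm_add_dm_mul_of_idempotent {N : ℕ} {P : ℝ × ℝ → Matrix (Fin N) (Fin N) ℂ}
    {p : ℝ × ℝ} (hP : DifferentiableAt ℝ P p) (hproj : ∀ q, P q * P q = P q) :
    P p * dm P p + dm P p * P p = dm P p := by
  have hD := fderiv_apply_anticomm_of_idempotent hP hproj
  conv_rhs => rw [dm, ← hD (1, 0), ← hD (0, 1)]
  simp only [dm, mul_add, add_mul, mul_smul_comm, smul_mul_assoc, smul_add]
  abel

theorem comm_mul_comm_of_anticomm {R : Type*} [Ring R] {Q A B : R} (hQ : Q * Q = Q)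
    (hA : Q * A + A * Q = A) (hB : Q * B + B * Q = B) :
    (A * Q - Q * A) * (B * Q - Q * B) = -(A * B) := by
  have sandwich {X : R} (hX : Q * X + X * Q = X) : Q * X * Q = 0 := by
    have := congrArg (Q * ·) hX
    simp only [mul_add, ← mul_assoc, hQ] at this
    simpa using this
  have hQA : Q * A = A - A * Q := eq_sub_of_add_eq hA
  calc (A * Q - Q * A) * (B * Q - Q * B)
      = A * (Q * B * Q) - A * (Q * Q * B) - Q * A * (B * Q) + Q * A * Q * B := by noncomm_ring
    _ = -(A * (Q * B)) - (A - A * Q) * (B * Q) := by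
        rw [sandwich hB, sandwich hA, hQ, hQA]; noncomm_ring
    _ = -(A * (Q * B + B * Q)) + A * (Q * B * Q) := by noncomm_ring
    _ = -(A * B) := by rw [sandwich hB, hB, mul_zero, add_zero]

/-- For a `C¹` idempotent-valued map `P`, at every point
`trace([∂₊P, P]·[∂₋P, P]) = −trace(∂₊P·∂₋P)`; consequently the tangent vectors
`∂₊F = −i[∂₊P, P]`, `∂₋F = i[∂₋P, P]` of the Generalized Weierstrass immersion satisfy
`(∂₊F, ∂₋F) = ½·trace(∂₊P·∂₋P)` with respect to the inner product `(X,Y) = −½ trace(X·Y)`. -/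
theorem GW_tangent_inner_product {N : ℕ} (P : ℝ × ℝ → Matrix (Fin N) (Fin N) ℂ)
    (hP : ContDiff ℝ 1 P) (hproj : ∀ p, P p * P p = P p) :
    ∀ p, ((dp P p * P p - P p * dp P p) * (dm P p * P p - P p * dm P p)).trace
        = -(dp P p * dm P p).trace
      ∧ -(2 : ℂ)⁻¹ * ((((-Complex.I) • (dp P p * P p - P p * dp P p)) *
            (Complex.I • (dm P p * P p - P p * dm P p))).trace)
        = (2 : ℂ)⁻¹ * (dp P p * dm P p).trace := by
  intro p
  have hPp := hP.differentiable one_ne_zero p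
  have htrace : ((dp P p * P p - P p * dp P p) * (dm P p * P p - P p * dm P p)).trace
      = -(dp P p * dm P p).trace := by
    rw [comm_mul_comm_of_anticomm (hproj p) (mul_dp_add_dp_mul_of_idempotent hPp hproj)
      (mul_dm_add_dm_mul_of_idempotent hPp hproj), trace_neg]
  refine ⟨htrace, ?_⟩
  rw [smul_mul_smul_comm, neg_mul Complex.I, Complex.I_mul_I, neg_neg, one_smul, htrace]
  ring
end
end

section
/- Let f : ℂ → ℂᴺ be holomorphic and nowhere vanishing, and let P(ξ) = (f(ξ)·f(ξ)†)/(f(ξ)†·f(ξ)) be the associated rank-one Hermitian projector, viewed as a smooth map ℝ² → Matrix (Fin N) (Fin N) ℂ via ξ₊ = x + iy. Then at every point trace(∂₊P·∂₊P) = 0 and trace(∂₋P·∂₋P) = 0; equivalently trace([∂₊P,P]²) = 0 and trace([∂₋P,P]²) = 0, so the Generalized Weierstrass immersion associated with P is conformally parameterized. -/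
open Matrix

noncomputable section

attribute [local instance] Matrix.normedAddCommGroup Matrix.normedSpace

/-- The rank-one Hermitian projector `P = (f·f†)/(f†·f)` associated to a vector-valued map
`f : ℂ → ℂᴺ`, viewed as a map on `ℝ²` via `ξ₊ = x + iy`. -/
def projOf {N : ℕ} (f : ℂ → (Fin N → ℂ)) (p : ℝ × ℝ) : Matrix (Fin N) (Fin N) ℂ :=
  (star (f ((p.1 : ℂ) + (p.2 : ℂ) * Complex.I)) ⬝ᵥ f ((p.1 : ℂ) + (p.2 : ℂ) * Complex.I))⁻¹ •
    vecMulVec (f ((p.1 : ℂ) + (p.2 : ℂ) * Complex.I))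
      (star (f ((p.1 : ℂ) + (p.2 : ℂ) * Complex.I)))

/-! Since `P` is idempotent, each Wirtinger derivative `D` of `P` satisfies the Leibniz relation
`D = D P + P D`. At a point `ξ₀`, the matrix `U = f · f(ξ₀)†` is holomorphic in `ξ` and `P U = U`,
so applying `∂₋` (which kills `U`) gives `∂₋P · U = 0`, i.e. `∂₋P · P = 0` at `ξ₀`; as `P` is
Hermitian, `∂₊P = (∂₋P)†` and hence `P · ∂₊P = 0`. If `D = D P + P D` and one of `D P`, `P D`
vanishes, then `D` equals the other one, so `D² = 0` and `[D, P] = ±D`: both `∂±P` and `[∂±P, P]`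
square to zero. -/

section Bilinear

variable {𝕜 : Type*} [NontriviallyNormedField 𝕜] [CompleteSpace 𝕜]
  {E F G H : Type*} [NormedAddCommGroup E] [NormedSpace 𝕜 E]
  [NormedAddCommGroup F] [NormedSpace 𝕜 F] [FiniteDimensional 𝕜 F]
  [NormedAddCommGroup G] [NormedSpace 𝕜 G] [FiniteDimensional 𝕜 G]
  [NormedAddCommGroup H] [NormedSpace 𝕜 H]
  {B : F → G → H} {a : E → F} {b : E → G} {x : E}

theorem IsBilinearMap.differentiableAt (hB : IsBilinearMap 𝕜 B) (ha : DifferentiableAt 𝕜 a x)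
    (hb : DifferentiableAt 𝕜 b x) : DifferentiableAt 𝕜 (fun y => B (a y) (b y)) x :=
  (hB.toContinuousBilinearMap.hasFDerivAt_of_bilinear ha.hasFDerivAt hb.hasFDerivAt).differentiableAt

theorem IsBilinearMap.fderiv_apply (hB : IsBilinearMap 𝕜 B) (ha : DifferentiableAt 𝕜 a x)
    (hb : DifferentiableAt 𝕜 b x) (v : E) :
    fderiv 𝕜 (fun y => B (a y) (b y)) x v = B (a x) (fderiv 𝕜 b x v) + B (fderiv 𝕜 a x v) (b x) := by
  have h := hB.toContinuousBilinearMap.fderiv_of_bilinear ha hb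
  simp only [IsBilinearMap.toContinuousBilinearMap_apply] at h
  simp [h]

end Bilinear

section MatrixBilinear

variable {R α : Type*} [CommSemiring R] [NonUnitalNonAssocSemiring α] [Module R α]
  [IsScalarTower R α α] [SMulCommClass R α α] {l m n : Type*}

theorem Matrix.isBilinearMap_mul [Fintype m] :
    IsBilinearMap R (fun (A : Matrix l m α) (B : Matrix m n α) => A * B) :=
  ⟨Matrix.add_mul, Matrix.smul_mul, Matrix.mul_add, fun c A B => Matrix.mul_smul A c B⟩

theorem Matrix.isBilinearMap_vecMulVec :
    IsBilinearMap R (fun (v : m → α) (w : n → α) => vecMulVec v w) :=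
  ⟨add_vecMulVec, smul_vecMulVec, vecMulVec_add, vecMulVec_smul⟩

theorem Matrix.isBilinearMap_dotProduct [Fintype n] :
    IsBilinearMap R (fun (v w : n → α) => v ⬝ᵥ w) :=
  ⟨add_dotProduct, smul_dotProduct, dotProduct_add, dotProduct_smul⟩

end MatrixBilinear

section MatrixCalculus

variable {E : Type*} [NormedAddCommGroup E] [NormedSpace ℝ E] {l m n : Type*}
  [Fintype l] [Fintype m] [Fintype n]

theorem fderiv_matrix_mul_apply_s4 {A : E → Matrix l m ℂ} {B : E → Matrix m n ℂ} {x : E}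
    (hA : DifferentiableAt ℝ A x) (hB : DifferentiableAt ℝ B x) (v : E) :
    fderiv ℝ (fun y => A y * B y) x v = A x * fderiv ℝ B x v + fderiv ℝ A x v * B x :=
  Matrix.isBilinearMap_mul.fderiv_apply hA hB v

theorem fderiv_matrix_star_apply (A : E → Matrix n n ℂ) (x v : E) :
    fderiv ℝ (fun y => star (A y)) x v = star (fderiv ℝ A x v) := by
  -- `fderiv_star` sees `star` through `StarAddMonoid`, not through `Matrix.instStar`
  erw [fderiv_star]
  rfl

end MatrixCalculus

theorem hasFDerivAt_ofReal_add_mul_I (p : ℝ × ℝ) :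
    HasFDerivAt (fun q : ℝ × ℝ => (q.1 : ℂ) + q.2 * Complex.I)
      (Complex.equivRealProdCLM.symm : ℝ × ℝ →L[ℝ] ℂ) p := by
  convert (Complex.equivRealProdCLM.symm : ℝ × ℝ →L[ℝ] ℂ).hasFDerivAt (x := p) using 1
  ext q
  simp [Complex.equivRealProdCLM_symm_apply]

section Wirtinger

variable {N : ℕ} {A B : ℝ × ℝ → Matrix (Fin N) (Fin N) ℂ} {p : ℝ × ℝ}

theorem dp_mul (hA : DifferentiableAt ℝ A p) (hB : DifferentiableAt ℝ B p) :
    dp (fun q => A q * B q) p = A p * dp B p + dp A p * B p := by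
  simp only [dp, fderiv_matrix_mul_apply_s4 hA hB, Matrix.mul_sub, Matrix.sub_mul,
    Matrix.mul_smul, Matrix.smul_mul, smul_sub, smul_add]
  abel

theorem dm_mul (hA : DifferentiableAt ℝ A p) (hB : DifferentiableAt ℝ B p) :
    dm (fun q => A q * B q) p = A p * dm B p + dm A p * B p := by
  simp only [dm, fderiv_matrix_mul_apply_s4 hA hB, Matrix.mul_add, Matrix.add_mul,
    Matrix.mul_smul, Matrix.smul_mul, smul_add]
  abel

theorem dp_star (A : ℝ × ℝ → Matrix (Fin N) (Fin N) ℂ) (p : ℝ × ℝ) :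
    dp (fun q => star (A q)) p = star (dm A p) := by
  simp [dp, dm, fderiv_matrix_star_apply, star_smul, Complex.conj_I, sub_eq_add_neg]

theorem dm_comp_eq_zero_of_differentiableAt {G : ℂ → Matrix (Fin N) (Fin N) ℂ}
    (hG : DifferentiableAt ℂ G (p.1 + p.2 * Complex.I)) :
    dm (fun q => G (q.1 + q.2 * Complex.I)) p = 0 := by
  have hGz : HasFDerivAt (fun q : ℝ × ℝ => G (q.1 + q.2 * Complex.I))
      ((fderiv ℂ G (p.1 + p.2 * Complex.I)).restrictScalars ℝ ∘L
        (Complex.equivRealProdCLM.symm : ℝ × ℝ →L[ℝ] ℂ)) p :=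
    (hG.hasFDerivAt.restrictScalars ℝ).comp p (hasFDerivAt_ofReal_add_mul_I p)
  have hI : fderiv ℂ G (p.1 + p.2 * Complex.I) Complex.I =
      Complex.I • fderiv ℂ G (p.1 + p.2 * Complex.I) 1 := by
    rw [← ContinuousLinearMap.map_smul, smul_eq_mul, mul_one]
  rw [dm, hGz.fderiv]
  simp [Complex.equivRealProdCLM_symm_apply, hI, smul_smul]

end Wirtinger

section RankOne

open scoped ComplexOrder

variable {𝕜 n : Type*} [RCLike 𝕜] [Fintype n]

def rankOneProj (v : n → 𝕜) : Matrix n n 𝕜 :=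
  (star v ⬝ᵥ v)⁻¹ • vecMulVec v (star v)

theorem rankOneProj_mul_vecMulVec {v : n → 𝕜} (hv : v ≠ 0) (w : n → 𝕜) :
    rankOneProj v * vecMulVec v w = vecMulVec v w := by
  have hr : star v ⬝ᵥ v ≠ 0 := dotProduct_star_self_eq_zero.not.mpr hv
  rw [rankOneProj, Matrix.smul_mul, vecMulVec_mul_vecMulVec, vecMulVec_smul, smul_smul,
    inv_mul_cancel₀ hr, one_smul]

theorem rankOneProj_mul_self {v : n → 𝕜} (hv : v ≠ 0) :
    rankOneProj v * rankOneProj v = rankOneProj v := by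
  nth_rewrite 2 [rankOneProj]
  rw [Matrix.mul_smul, rankOneProj_mul_vecMulVec hv, rankOneProj]

theorem star_rankOneProj (v : n → 𝕜) : star (rankOneProj v) = rankOneProj v := by
  rw [rankOneProj, star_smul, star_inv₀, ← star_dotProduct_star, star_star,
    Matrix.star_eq_conjTranspose, conjTranspose_vecMulVec, star_star]

theorem DifferentiableAt.rankOneProj {E : Type*} [NormedAddCommGroup E] [NormedSpace ℝ E]
    {u : E → n → ℂ} {x : E} (hu : DifferentiableAt ℝ u x) (hx : u x ≠ 0) :
    DifferentiableAt ℝ (fun y => _root_.rankOneProj (u y)) x := by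
  have hsu : DifferentiableAt ℝ (fun y => star (u y)) x := hu.star
  have hr := (Matrix.isBilinearMap_dotProduct (α := ℂ)).differentiableAt hsu hu
  have hM := (Matrix.isBilinearMap_vecMulVec (α := ℂ)).differentiableAt hu hsu
  exact (hr.inv (dotProduct_star_self_eq_zero.not.mpr hx)).smul hM

end RankOne

theorem mul_self_eq_zero_of_leibniz {R : Type*} [Ring R] {P D : R} (hD : D = D * P + P * D)
    (h : D * P = 0 ∨ P * D = 0) : D * D = 0 ∧ (D * P - P * D) * (D * P - P * D) = 0 := by
  rcases h with h | h
  · have hD' : D = P * D := by rwa [h, zero_add] at hD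
    have hDD : D * D = 0 := by nth_rewrite 2 [hD']; rw [← mul_assoc, h, zero_mul]
    exact ⟨hDD, by rw [h, ← hD', zero_sub, neg_mul_neg, hDD]⟩
  · have hD' : D = D * P := by rwa [h, add_zero] at hD
    have hDD : D * D = 0 := by nth_rewrite 1 [hD']; rw [mul_assoc, h, mul_zero]
    exact ⟨hDD, by rw [h, ← hD', sub_zero, hDD]⟩

section Projector

variable {N : ℕ} {f : ℂ → (Fin N → ℂ)}

theorem projOf_eq (f : ℂ → (Fin N → ℂ)) :
    projOf f = fun q => rankOneProj (f (q.1 + q.2 * Complex.I)) :=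
  rfl

theorem projOf_mul_self (hf0 : ∀ ξ, f ξ ≠ 0) (q : ℝ × ℝ) :
    projOf f q * projOf f q = projOf f q := by
  rw [projOf_eq]
  exact rankOneProj_mul_self (hf0 _)

theorem star_projOf (f : ℂ → (Fin N → ℂ)) (q : ℝ × ℝ) : star (projOf f q) = projOf f q := by
  rw [projOf_eq]
  exact star_rankOneProj _

theorem differentiableAt_projOf (hf : Differentiable ℂ f) (hf0 : ∀ ξ, f ξ ≠ 0) (p : ℝ × ℝ) :
    DifferentiableAt ℝ (projOf f) p := by
  have hfz : DifferentiableAt ℝ (fun q : ℝ × ℝ => f (q.1 + q.2 * Complex.I)) p :=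
    ((hf _).restrictScalars ℝ).comp p (hasFDerivAt_ofReal_add_mul_I p).differentiableAt
  rw [projOf_eq]
  exact hfz.rankOneProj (hf0 _)

theorem dm_projOf_mul_projOf (hf : Differentiable ℂ f) (hf0 : ∀ ξ, f ξ ≠ 0) (p : ℝ × ℝ) :
    dm (projOf f) p * projOf f p = 0 := by
  set ξ : ℂ := p.1 + p.2 * Complex.I
  set U : ℂ → Matrix (Fin N) (Fin N) ℂ := fun w => vecMulVec (f w) (star (f ξ))
  have hU : Differentiable ℂ U := fun w =>
    (Matrix.isBilinearMap_vecMulVec (α := ℂ)).differentiableAt (hf w) (differentiableAt_const _)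
  have hUz : DifferentiableAt ℝ (fun q : ℝ × ℝ => U (q.1 + q.2 * Complex.I)) p :=
    ((hU _).restrictScalars ℝ).comp p (hasFDerivAt_ofReal_add_mul_I p).differentiableAt
  have hPU : (fun q : ℝ × ℝ => projOf f q * U (q.1 + q.2 * Complex.I)) =
      fun q => U (q.1 + q.2 * Complex.I) :=
    funext fun q => by rw [projOf_eq]; exact rankOneProj_mul_vecMulVec (hf0 _) _
  have hDU : dm (projOf f) p * U ξ = 0 := by
    have h := dm_mul (differentiableAt_projOf hf hf0 p) hUz
    rwa [hPU, dm_comp_eq_zero_of_differentiableAt (hU _), mul_zero, zero_add, eq_comm] at h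
  rw [projOf, Matrix.mul_smul, hDU, smul_zero]

end Projector

/-- For the projector `P` associated to a nowhere-vanishing holomorphic `f : ℂ → ℂᴺ`,
`trace(∂₊P·∂₊P) = trace(∂₋P·∂₋P) = 0` and `trace([∂₊P,P]²) = trace([∂₋P,P]²) = 0`, so the
Generalized Weierstrass immersion associated with `P` is conformally parameterized. -/
theorem holomorphic_projector_conformal {N : ℕ} (f : ℂ → (Fin N → ℂ))
    (hf : Differentiable ℂ f) (hf0 : ∀ ξ, f ξ ≠ 0)
    (P : ℝ × ℝ → Matrix (Fin N) (Fin N) ℂ) (hPdef : P = projOf f) :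
    ∀ p, (dp P p * dp P p).trace = 0
      ∧ (dm P p * dm P p).trace = 0
      ∧ ((dp P p * P p - P p * dp P p) * (dp P p * P p - P p * dp P p)).trace = 0
      ∧ ((dm P p * P p - P p * dm P p) * (dm P p * P p - P p * dm P p)).trace = 0 := by
  intro p
  have hP : DifferentiableAt ℝ P p := hPdef ▸ differentiableAt_projOf hf hf0 p
  have hidem : (fun q => P q * P q) = P := hPdef ▸ funext (projOf_mul_self hf0)
  have hherm : (fun q => star (P q)) = P := hPdef ▸ funext (star_projOf f)
  have hDmP : dm P p * P p = 0 := hPdef ▸ dm_projOf_mul_projOf hf hf0 p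
  have hDp : dp P p = star (dm P p) := by rw [← dp_star, hherm]
  have hPDp : P p * dp P p = 0 := by
    rw [hDp, ← congrFun hherm p, ← star_mul, hDmP, star_zero]
  have hleib_p : dp P p = dp P p * P p + P p * dp P p := by
    simpa [hidem, add_comm] using dp_mul hP hP
  have hleib_m : dm P p = dm P p * P p + P p * dm P p := by
    simpa [hidem, add_comm] using dm_mul hP hP
  obtain ⟨hp_sq, hp_comm⟩ := mul_self_eq_zero_of_leibniz hleib_p (Or.inr hPDp)
  obtain ⟨hm_sq, hm_comm⟩ := mul_self_eq_zero_of_leibniz hleib_m (Or.inl hDmP)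
  simp [hp_sq, hp_comm, hm_sq, hm_comm]
end
end

section
/- Let f : ℂ → ℂᴺ be holomorphic and nowhere vanishing, and let P(ξ) = (f(ξ)·f(ξ)†)/(f(ξ)†·f(ξ)), viewed as a smooth map ℝ² → Matrix (Fin N) (Fin N) ℂ via ξ₊ = x + iy. Then P satisfies the Euler–Lagrange equation of the CP^{N−1} sigma model: [∂₊∂₋P, P] = 0 at every point. -/
open Matrix

noncomputable section

attribute [local instance] Matrix.normedAddCommGroup Matrix.normedSpace

/-!
Write `F(x, y) = f(x + iy)`, so that `P = F F† / ‖F‖²`. As `f` is holomorphic, `∂₋F = 0`, and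
differentiating `P F = F` gives `(∂₋P) F = 0`, i.e. `(∂₋P) P = 0`; since `P` is Hermitian,
`∂₊P = (∂₋P)†` and therefore `P ∂₊P = 0`. Differentiating `P² = P` upgrades these to
`P ∂₋P = ∂₋P` and `(∂₊P) P = ∂₊P`. Now apply `∂₊` to `(∂₋P) P = 0` and to `P ∂₋P = ∂₋P`, and `∂₋`
to `(∂₊P) P = ∂₊P`; with `∂₋∂₊P = ∂₊∂₋P` the three identities give
`(∂₊∂₋P) P = -(∂₋P)(∂₊P) = P (∂₊∂₋P)`.
-/

section Wirtinger

open ContinuousLinearMap (apply)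

variable {E F G : Type*} [NormedAddCommGroup E] [NormedSpace ℂ E]
  [NormedAddCommGroup F] [NormedSpace ℂ F] [NormedAddCommGroup G] [NormedSpace ℂ G]

/- On matrix-valued maps `wirtingerPlus` and `wirtingerMinus` are definitionally `dp` and `dm`;
factoring them through continuous linear maps on `ℝ × ℝ →L[ℝ] E` makes `∂± g` as smooth as
`fderiv ℝ g`. -/

def wirtingerPlusCLM : (ℝ × ℝ →L[ℝ] E) →L[ℝ] E :=
  (2 : ℂ)⁻¹ • (apply ℝ E (1, 0) - Complex.I • apply ℝ E (0, 1))

def wirtingerMinusCLM : (ℝ × ℝ →L[ℝ] E) →L[ℝ] E :=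
  (2 : ℂ)⁻¹ • (apply ℝ E (1, 0) + Complex.I • apply ℝ E (0, 1))

def wirtingerPlus (g : ℝ × ℝ → E) (p : ℝ × ℝ) : E := wirtingerPlusCLM (fderiv ℝ g p)

def wirtingerMinus (g : ℝ × ℝ → E) (p : ℝ × ℝ) : E := wirtingerMinusCLM (fderiv ℝ g p)

theorem wirtingerPlus_apply (g : ℝ × ℝ → E) (p : ℝ × ℝ) :
    wirtingerPlus g p =
      (2 : ℂ)⁻¹ • (fderiv ℝ g p (1, 0) - Complex.I • fderiv ℝ g p (0, 1)) := rfl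

theorem wirtingerMinus_apply (g : ℝ × ℝ → E) (p : ℝ × ℝ) :
    wirtingerMinus g p =
      (2 : ℂ)⁻¹ • (fderiv ℝ g p (1, 0) + Complex.I • fderiv ℝ g p (0, 1)) := rfl

theorem wirtingerPlus_const (c : E) (p : ℝ × ℝ) : wirtingerPlus (fun _ => c) p = 0 := by
  simp [wirtingerPlus]

variable {M : ℝ × ℝ → E} {N : ℝ × ℝ → F} {p : ℝ × ℝ}

theorem fderiv_bilinear_apply (B : E →L[ℂ] F →L[ℂ] G) (hM : DifferentiableAt ℝ M p)
    (hN : DifferentiableAt ℝ N p) (v : ℝ × ℝ) :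
    fderiv ℝ (fun q => B (M q) (N q)) p v =
      B (fderiv ℝ M p v) (N p) + B (M p) (fderiv ℝ N p v) := by
  have hB : HasFDerivAt (fun q => B (M q) (N q)) _ p :=
    (B.bilinearRestrictScalars ℝ).hasFDerivAt_of_bilinear hM.hasFDerivAt hN.hasFDerivAt
  rw [hB.fderiv]
  simp [add_comm]

theorem wirtingerPlus_bilinear (B : E →L[ℂ] F →L[ℂ] G) (hM : DifferentiableAt ℝ M p)
    (hN : DifferentiableAt ℝ N p) :
    wirtingerPlus (fun q => B (M q) (N q)) p =
      B (wirtingerPlus M p) (N p) + B (M p) (wirtingerPlus N p) := by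
  simp only [wirtingerPlus_apply, fderiv_bilinear_apply B hM hN, map_smul, map_sub,
    _root_.smul_apply, _root_.sub_apply]
  module

theorem wirtingerMinus_bilinear (B : E →L[ℂ] F →L[ℂ] G) (hM : DifferentiableAt ℝ M p)
    (hN : DifferentiableAt ℝ N p) :
    wirtingerMinus (fun q => B (M q) (N q)) p =
      B (wirtingerMinus M p) (N p) + B (M p) (wirtingerMinus N p) := by
  simp only [wirtingerMinus_apply, fderiv_bilinear_apply B hM hN, map_smul, map_add,
    _root_.smul_apply, _root_.add_apply]
  module

theorem wirtingerPlus_star [StarAddMonoid E] [StarModule ℂ E] [ContinuousStar E]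
    (g : ℝ × ℝ → E) (p : ℝ × ℝ) :
    wirtingerPlus (fun q => star (g q)) p = star (wirtingerMinus g p) := by
  simp [wirtingerPlus_apply, wirtingerMinus_apply, fderiv_star, star_smul, sub_eq_add_neg]

theorem wirtingerMinus_comp_eq_zero_of_differentiableAt {f : ℂ → E}
    (hf : DifferentiableAt ℂ f (p.1 + p.2 * Complex.I)) :
    wirtingerMinus (fun q : ℝ × ℝ => f (q.1 + q.2 * Complex.I)) p = 0 := by
  simp_rw [← Complex.equivRealProdCLM_symm_apply] at hf ⊢
  have hd : HasFDerivAt (fun q => f (Complex.equivRealProdCLM.symm q)) _ p :=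
    (hf.hasFDerivAt.restrictScalars ℝ).comp p Complex.equivRealProdCLM.symm.hasFDerivAt
  rw [wirtingerMinus_apply, hd.fderiv]
  simp [Complex.equivRealProdCLM_symm_apply, smul_smul]

theorem Differentiable.contDiff_comp_equivRealProd_symm [CompleteSpace E] {f : ℂ → E}
    (hf : Differentiable ℂ f) {k : WithTop ℕ∞} :
    ContDiff ℝ k (fun q : ℝ × ℝ => f (q.1 + q.2 * Complex.I)) := by
  simp_rw [← Complex.equivRealProdCLM_symm_apply]
  exact (hf.contDiff.restrict_scalars ℝ).comp Complex.equivRealProdCLM.symm.contDiff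

theorem ContDiff.differentiable_wirtingerPlus {P : ℝ × ℝ → E} (hP : ContDiff ℝ 2 P) :
    Differentiable ℝ (wirtingerPlus P) :=
  ((wirtingerPlusCLM (E := E)).contDiff.comp
    (hP.fderiv_right (m := 1) le_rfl)).differentiable one_ne_zero

theorem ContDiff.differentiable_wirtingerMinus {P : ℝ × ℝ → E} (hP : ContDiff ℝ 2 P) :
    Differentiable ℝ (wirtingerMinus P) :=
  ((wirtingerMinusCLM (E := E)).contDiff.comp
    (hP.fderiv_right (m := 1) le_rfl)).differentiable one_ne_zero

theorem wirtingerMinus_wirtingerPlus_comm {P : ℝ × ℝ → E} (hP : ContDiffAt ℝ 2 P p) :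
    wirtingerMinus (wirtingerPlus P) p = wirtingerPlus (wirtingerMinus P) p := by
  have hP' : DifferentiableAt ℝ (fderiv ℝ P) p :=
    (hP.fderiv_right (m := 1) le_rfl).differentiableAt one_ne_zero
  have hsymm := hP.isSymmSndFDerivAt (by simp)
  rw [wirtingerMinus, wirtingerPlus,
    show wirtingerPlus P = wirtingerPlusCLM ∘ fderiv ℝ P from rfl,
    show wirtingerMinus P = wirtingerMinusCLM ∘ fderiv ℝ P from rfl,
    (wirtingerPlusCLM.hasFDerivAt.comp p hP'.hasFDerivAt).fderiv,
    (wirtingerMinusCLM.hasFDerivAt.comp p hP'.hasFDerivAt).fderiv]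
  simp [wirtingerPlusCLM, wirtingerMinusCLM, hsymm (1, 0) (0, 1)]
  module

end Wirtinger

section MatrixLeibniz

variable {l m n : Type*} [Fintype l] [Fintype m] [Fintype n] {p : ℝ × ℝ}

theorem wirtingerPlus_mul {M : ℝ × ℝ → Matrix l m ℂ} {N : ℝ × ℝ → Matrix m n ℂ}
    (hM : DifferentiableAt ℝ M p) (hN : DifferentiableAt ℝ N p) :
    wirtingerPlus (fun q => M q * N q) p = wirtingerPlus M p * N p + M p * wirtingerPlus N p := by
  simpa using wirtingerPlus_bilinear (mulLinearMap ℂ).toContinuousBilinearMap hM hN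

theorem wirtingerMinus_mul {M : ℝ × ℝ → Matrix l m ℂ} {N : ℝ × ℝ → Matrix m n ℂ}
    (hM : DifferentiableAt ℝ M p) (hN : DifferentiableAt ℝ N p) :
    wirtingerMinus (fun q => M q * N q) p =
      wirtingerMinus M p * N p + M p * wirtingerMinus N p := by
  simpa using wirtingerMinus_bilinear (mulLinearMap ℂ).toContinuousBilinearMap hM hN

theorem wirtingerMinus_mulVec {M : ℝ × ℝ → Matrix m n ℂ} {v : ℝ × ℝ → n → ℂ}
    (hM : DifferentiableAt ℝ M p) (hv : DifferentiableAt ℝ v p) :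
    wirtingerMinus (fun q => M q *ᵥ v q) p =
      wirtingerMinus M p *ᵥ v p + M p *ᵥ wirtingerMinus v p := by
  simpa using wirtingerMinus_bilinear (Matrix.mulVecBilin ℂ ℂ).toContinuousBilinearMap hM hv

end MatrixLeibniz

section Idempotent

variable {n : Type*} [Fintype n] {P : ℝ × ℝ → Matrix n n ℂ} {p : ℝ × ℝ}

theorem mul_wirtingerMinus_of_isIdempotentElem (hP : ∀ q, IsIdempotentElem (P q))
    (hd : DifferentiableAt ℝ P p) (h : wirtingerMinus P p * P p = 0) :
    P p * wirtingerMinus P p = wirtingerMinus P p := by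
  have := wirtingerMinus_mul hd hd
  simp only [(hP _).eq, h, zero_add] at this
  exact this.symm

theorem wirtingerPlus_mul_of_isIdempotentElem (hP : ∀ q, IsIdempotentElem (P q))
    (hd : DifferentiableAt ℝ P p) (h : P p * wirtingerPlus P p = 0) :
    wirtingerPlus P p * P p = wirtingerPlus P p := by
  have := wirtingerPlus_mul hd hd
  simp only [(hP _).eq, h, add_zero] at this
  exact this.symm

theorem commute_wirtingerPlus_wirtingerMinus_of_isIdempotentElem (hP : ContDiff ℝ 2 P)
    (hidem : ∀ q, IsIdempotentElem (P q)) (hminus : ∀ q, wirtingerMinus P q * P q = 0)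
    (hplus : ∀ q, P q * wirtingerPlus P q = 0) (p : ℝ × ℝ) :
    Commute (wirtingerPlus (wirtingerMinus P) p) (P p) := by
  set A := wirtingerPlus P
  set B := wirtingerMinus P
  set X := wirtingerPlus B p
  have hPd : Differentiable ℝ P := hP.differentiable two_ne_zero
  have hXP : X * P p = -(B p * A p) := by
    have := wirtingerPlus_mul (hP.differentiable_wirtingerMinus p) (hPd p)
    rw [funext hminus, wirtingerPlus_const] at this
    exact eq_neg_of_add_eq_zero_left this.symm
  have hPX : P p * X = X - A p * B p := by
    have := wirtingerPlus_mul (hPd p) (hP.differentiable_wirtingerMinus p)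
    rw [funext fun q => mul_wirtingerMinus_of_isIdempotentElem hidem (hPd q) (hminus q)] at this
    exact eq_sub_of_add_eq' this.symm
  have hX : X = X * P p + A p * B p := by
    have := wirtingerMinus_mul (hP.differentiable_wirtingerPlus p) (hPd p)
    rwa [funext fun q => wirtingerPlus_mul_of_isIdempotentElem hidem (hPd q) (hplus q),
      wirtingerMinus_wirtingerPlus_comm hP.contDiffAt] at this
  rw [Commute, SemiconjBy, hXP, hPX, hX, hXP]
  abel

end Idempotent

section LineProjection

variable {𝕜 n : Type*} [RCLike 𝕜] [Fintype n]

def lineProjection (v : n → 𝕜) : Matrix n n 𝕜 := (star v ⬝ᵥ v)⁻¹ • vecMulVec v (star v)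

variable {v : n → 𝕜}

open scoped ComplexOrder in
theorem star_dotProduct_self_ne_zero (hv : v ≠ 0) : star v ⬝ᵥ v ≠ 0 :=
  dotProduct_star_self_eq_zero.not.2 hv

theorem lineProjection_mulVec_self (hv : v ≠ 0) : lineProjection v *ᵥ v = v := by
  simp [star_dotProduct_self_ne_zero hv, lineProjection, smul_mulVec, vecMulVec_mulVec,
    smul_smul]

theorem isIdempotentElem_lineProjection (hv : v ≠ 0) : IsIdempotentElem (lineProjection v) := by
  simp [star_dotProduct_self_ne_zero hv, IsIdempotentElem, lineProjection,
    vecMulVec_mul_vecMulVec, smul_smul]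

theorem isHermitian_lineProjection (v : n → 𝕜) : (lineProjection v).IsHermitian := by
  rw [IsHermitian, lineProjection, conjTranspose_smul, conjTranspose_vecMulVec, star_inv₀,
    ← star_dotProduct, star_star]

theorem mul_lineProjection_eq_zero {m : Type*} {A : Matrix m n 𝕜} (h : A *ᵥ v = 0) :
    A * lineProjection v = 0 := by
  simp [lineProjection, mul_vecMulVec, h]

end LineProjection

theorem contDiffAt_lineProjection {n : Type*} [Fintype n] {k : WithTop ℕ∞} {v : n → ℂ}
    (hv : v ≠ 0) : ContDiffAt ℝ k lineProjection v := by
  have hstar : ContDiff ℝ k (star : (n → ℂ) → n → ℂ) := (starL' ℝ : (n → ℂ) ≃L[ℝ] _).contDiff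
  have hdot : ContDiff ℝ k fun w : n → ℂ => star w ⬝ᵥ w :=
    (((dotProductBilin ℂ ℂ : (n → ℂ) →ₗ[ℂ] _ →ₗ[ℂ] ℂ).toContinuousBilinearMap
      |>.isBoundedBilinearMap.contDiff).restrict_scalars ℝ).comp (hstar.prodMk contDiff_id)
  have houter : ContDiff ℝ k fun w : n → ℂ => vecMulVec w (star w) :=
    (((vecMulVecBilin ℂ ℂ : (n → ℂ) →ₗ[ℂ] _ →ₗ[ℂ] Matrix n n ℂ).toContinuousBilinearMap
      |>.isBoundedBilinearMap.contDiff).restrict_scalars ℝ).comp (contDiff_id.prodMk hstar)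
  exact (hdot.contDiffAt.inv (star_dotProduct_self_ne_zero hv)).smul houter.contDiffAt

section HolomorphicProjector

variable {N : ℕ} {f : ℂ → Fin N → ℂ}

theorem contDiff_projOf (hf : Differentiable ℂ f) (hf0 : ∀ ξ, f ξ ≠ 0) :
    ContDiff ℝ 2 (projOf f) :=
  contDiff_iff_contDiffAt.2 fun p =>
    (contDiffAt_lineProjection (hf0 _)).comp p hf.contDiff_comp_equivRealProd_symm.contDiffAt

theorem wirtingerMinus_projOf_mul_projOf (hf : Differentiable ℂ f) (hf0 : ∀ ξ, f ξ ≠ 0)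
    (p : ℝ × ℝ) : wirtingerMinus (projOf f) p * projOf f p = 0 := by
  have hF : DifferentiableAt ℝ (fun q : ℝ × ℝ => f (q.1 + q.2 * Complex.I)) p :=
    (hf.contDiff_comp_equivRealProd_symm (k := 1)).differentiable one_ne_zero p
  have h := wirtingerMinus_mulVec ((contDiff_projOf hf hf0).differentiable two_ne_zero p) hF
  simp only [projOf, ← lineProjection.eq_1, lineProjection_mulVec_self (hf0 _),
    wirtingerMinus_comp_eq_zero_of_differentiableAt (hf _), mulVec_zero, add_zero] at h
  exact mul_lineProjection_eq_zero h.symm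

theorem projOf_mul_wirtingerPlus_projOf (hf : Differentiable ℂ f) (hf0 : ∀ ξ, f ξ ≠ 0)
    (p : ℝ × ℝ) : projOf f p * wirtingerPlus (projOf f) p = 0 := by
  have hherm : ∀ q, star (projOf f q) = projOf f q := fun q => (isHermitian_lineProjection _).eq
  have hstar : wirtingerPlus (projOf f) p = star (wirtingerMinus (projOf f) p) := by
    simpa only [hherm] using wirtingerPlus_star (projOf f) p
  calc projOf f p * wirtingerPlus (projOf f) p
      = star (projOf f p) * star (wirtingerMinus (projOf f) p) := by rw [hstar, hherm]
    _ = star (wirtingerMinus (projOf f) p * projOf f p) := (star_mul _ _).symm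
    _ = 0 := by rw [wirtingerMinus_projOf_mul_projOf hf hf0, star_zero]

end HolomorphicProjector

/-- The projector `P` associated to a nowhere-vanishing holomorphic `f : ℂ → ℂᴺ` satisfies the
Euler–Lagrange equation of the `CP^{N−1}` sigma model: `[∂₊∂₋P, P] = 0` everywhere. -/
theorem holomorphic_projector_satisfies_EL {N : ℕ} (f : ℂ → (Fin N → ℂ))
    (hf : Differentiable ℂ f) (hf0 : ∀ ξ, f ξ ≠ 0)
    (P : ℝ × ℝ → Matrix (Fin N) (Fin N) ℂ) (hPdef : P = projOf f) :
    ∀ p, dp (fun q => dm P q) p * P p - P p * dp (fun q => dm P q) p = 0 := by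
  subst hPdef
  exact fun p => sub_eq_zero.2 (commute_wirtingerPlus_wirtingerMinus_of_isIdempotentElem
    (contDiff_projOf hf hf0) (fun _ => isIdempotentElem_lineProjection (hf0 _))
    (wirtingerMinus_projOf_mul_projOf hf hf0) (projOf_mul_wirtingerPlus_projOf hf hf0) p).eq
end
end

section
/- Let P : ℝ² → Matrix (Fin N) (Fin N) ℂ be a smooth rank-one Hermitian projector (P² = P, Pᴴ = P, tr P = 1 everywhere) satisfying the Euler–Lagrange equation [∂₊∂₋P, P] = 0 with finite action ∫_{ℝ²} trace(∂₊P·∂₋P) dx dy < ∞. Suppose s := trace(∂₋P·P·∂₊P) is nowhere zero, set P' := Π₋P = (∂₋P·P·∂₊P)/s, and suppose trace(∂₊P'·P'·∂₋P') is nowhere zero. Then the raising and lowering operators are mutual inverses: Π₊(Π₋P) = P. -/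
open Matrix

noncomputable section

attribute [local instance] Matrix.normedAddCommGroup Matrix.normedSpace

namespace CP

variable {N : ℕ}

local notation "Mat" => Matrix (Fin N) (Fin N) ℂ

lemma isBBM_mul : IsBoundedBilinearMap ℝ (fun x : Mat × Mat => x.1 * x.2) := by
  refine ⟨fun a b c => add_mul a b c, fun r a b => smul_mul_assoc r a b,
    fun a b c => mul_add a b c, fun r a b => mul_smul_comm r a b, ⟨(N : ℝ) + 1, by positivity, ?_⟩⟩
  intro A B
  have h0 : (0:ℝ) ≤ ((N:ℝ)+1) * ‖A‖ * ‖B‖ := by positivity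
  rw [Matrix.norm_le_iff h0]
  intro i j
  calc ‖(A * B) i j‖ = ‖∑ k, A i k * B k j‖ := by rw [Matrix.mul_apply]
    _ ≤ ∑ k, ‖A i k * B k j‖ := norm_sum_le _ _
    _ ≤ ∑ _k : Fin N, ‖A‖ * ‖B‖ := Finset.sum_le_sum fun k _ => by
        rw [norm_mul]
        exact mul_le_mul (Matrix.norm_entry_le_entrywise_sup_norm A)
          (Matrix.norm_entry_le_entrywise_sup_norm B) (norm_nonneg _) (norm_nonneg _)
    _ = (N:ℝ) * (‖A‖ * ‖B‖) := by simp [Finset.sum_const, mul_assoc]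
    _ ≤ ((N:ℝ)+1) * ‖A‖ * ‖B‖ := by nlinarith [norm_nonneg A, norm_nonneg B]

lemma fderiv_mul_apply {f g : ℝ × ℝ → Mat} {p : ℝ × ℝ}
    (hf : DifferentiableAt ℝ f p) (hg : DifferentiableAt ℝ g p) (v : ℝ × ℝ) :
    fderiv ℝ (fun q => f q * g q) p v = fderiv ℝ f p v * g p + f p * fderiv ℝ g p v := by
  have h := (isBBM_mul.hasFDerivAt (f p, g p)).comp p (hf.hasFDerivAt.prodMk hg.hasFDerivAt)
  have h2 : HasFDerivAt (fun q => f q * g q)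
      ((isBBM_mul.deriv (f p, g p)).comp ((fderiv ℝ f p).prod (fderiv ℝ g p))) p := h
  erw [h2.fderiv]
  simp [IsBoundedBilinearMap.deriv_apply, add_comm]
  rfl

lemma diffAt_mul {f g : ℝ × ℝ → Mat} {p : ℝ × ℝ}
    (hf : DifferentiableAt ℝ f p) (hg : DifferentiableAt ℝ g p) :
    DifferentiableAt ℝ (fun q => f q * g q) p :=
  by
  have h := (isBBM_mul.hasFDerivAt (f p, g p)).comp p (hf.hasFDerivAt.prodMk hg.hasFDerivAt)
  exact h.differentiableAt

lemma dp_mul {f g : ℝ × ℝ → Mat} {p : ℝ × ℝ}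
    (hf : DifferentiableAt ℝ f p) (hg : DifferentiableAt ℝ g p) :
    dp (fun q => f q * g q) p = dp f p * g p + f p * dp g p := by
  unfold dp
  rw [fderiv_mul_apply hf hg, fderiv_mul_apply hf hg]
  simp only [smul_sub, smul_add, sub_mul, add_mul, mul_sub, mul_add,
    smul_mul_assoc, mul_smul_comm]
  module

lemma dm_mul {f g : ℝ × ℝ → Mat} {p : ℝ × ℝ}
    (hf : DifferentiableAt ℝ f p) (hg : DifferentiableAt ℝ g p) :
    dm (fun q => f q * g q) p = dm f p * g p + f p * dm g p := by
  unfold dm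
  rw [fderiv_mul_apply hf hg, fderiv_mul_apply hf hg]
  simp only [smul_sub, smul_add, sub_mul, add_mul, mul_sub, mul_add,
    smul_mul_assoc, mul_smul_comm]
  module

/-- scalar Wirtinger derivatives -/
def dpc (σ : ℝ × ℝ → ℂ) (p : ℝ × ℝ) : ℂ :=
  (2 : ℂ)⁻¹ * (fderiv ℝ σ p (1, 0) - Complex.I * fderiv ℝ σ p (0, 1))

def dmc (σ : ℝ × ℝ → ℂ) (p : ℝ × ℝ) : ℂ :=
  (2 : ℂ)⁻¹ * (fderiv ℝ σ p (1, 0) + Complex.I * fderiv ℝ σ p (0, 1))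

lemma fderiv_smul_apply {σ : ℝ × ℝ → ℂ} {f : ℝ × ℝ → Mat} {p : ℝ × ℝ}
    (hσ : DifferentiableAt ℝ σ p) (hf : DifferentiableAt ℝ f p) (v : ℝ × ℝ) :
    fderiv ℝ (fun q => σ q • f q) p v = fderiv ℝ σ p v • f p + σ p • fderiv ℝ f p v := by
  erw [fderiv_fun_smul hσ hf]
  simp [add_comm]
  rfl

lemma dp_smul {σ : ℝ × ℝ → ℂ} {f : ℝ × ℝ → Mat} {p : ℝ × ℝ}
    (hσ : DifferentiableAt ℝ σ p) (hf : DifferentiableAt ℝ f p) :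
    dp (fun q => σ q • f q) p = dpc σ p • f p + σ p • dp f p := by
  unfold dp dpc
  rw [fderiv_smul_apply hσ hf, fderiv_smul_apply hσ hf]
  module

lemma dm_smul {σ : ℝ × ℝ → ℂ} {f : ℝ × ℝ → Mat} {p : ℝ × ℝ}
    (hσ : DifferentiableAt ℝ σ p) (hf : DifferentiableAt ℝ f p) :
    dm (fun q => σ q • f q) p = dmc σ p • f p + σ p • dm f p := by
  unfold dm dmc
  rw [fderiv_smul_apply hσ hf, fderiv_smul_apply hσ hf]
  module

lemma dpc_mul {σ τ : ℝ × ℝ → ℂ} {p : ℝ × ℝ}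
    (hσ : DifferentiableAt ℝ σ p) (hτ : DifferentiableAt ℝ τ p) :
    dpc (fun q => σ q * τ q) p = dpc σ p * τ p + σ p * dpc τ p := by
  unfold dpc
  rw [fderiv_fun_mul hσ hτ]
  simp only [ContinuousLinearMap.add_apply, ContinuousLinearMap.smul_apply, smul_eq_mul]
  ring

lemma dmc_mul {σ τ : ℝ × ℝ → ℂ} {p : ℝ × ℝ}
    (hσ : DifferentiableAt ℝ σ p) (hτ : DifferentiableAt ℝ τ p) :
    dmc (fun q => σ q * τ q) p = dmc σ p * τ p + σ p * dmc τ p := by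
  unfold dmc
  rw [fderiv_fun_mul hσ hτ]
  simp only [ContinuousLinearMap.add_apply, ContinuousLinearMap.smul_apply, smul_eq_mul]
  ring

/-- trace as an ℝ-continuous-linear map -/
def trCLM : Mat →L[ℝ] ℂ :=
  LinearMap.toContinuousLinearMap ((Matrix.traceLinearMap (Fin N) ℂ ℂ).restrictScalars ℝ)

@[simp] lemma trCLM_apply (A : Mat) : trCLM A = A.trace := rfl

lemma diffAt_trace {f : ℝ × ℝ → Mat} {p : ℝ × ℝ} (hf : DifferentiableAt ℝ f p) :
    DifferentiableAt ℝ (fun q => (f q).trace) p :=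
  (trCLM.hasFDerivAt.comp p hf.hasFDerivAt).differentiableAt

lemma dpc_trace {f : ℝ × ℝ → Mat} {p : ℝ × ℝ} (hf : DifferentiableAt ℝ f p) :
    dpc (fun q => (f q).trace) p = (dp f p).trace := by
  have h := (trCLM.hasFDerivAt (x := f p)).comp p hf.hasFDerivAt
  have h2 : HasFDerivAt (fun q => (f q).trace) (trCLM.comp (fderiv ℝ f p)) p := h
  unfold dpc dp
  rw [h2.fderiv]
  simp [Matrix.trace_sub, Matrix.trace_smul, smul_eq_mul]

lemma dmc_trace {f : ℝ × ℝ → Mat} {p : ℝ × ℝ} (hf : DifferentiableAt ℝ f p) :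
    dmc (fun q => (f q).trace) p = (dm f p).trace := by
  have h := (trCLM.hasFDerivAt (x := f p)).comp p hf.hasFDerivAt
  have h2 : HasFDerivAt (fun q => (f q).trace) (trCLM.comp (fderiv ℝ f p)) p := h
  unfold dmc dm
  rw [h2.fderiv]
  simp [Matrix.trace_add, Matrix.trace_smul, smul_eq_mul]
  ring


lemma contDiff_fderiv_apply {P : ℝ × ℝ → Mat} (hP : ContDiff ℝ (⊤ : ℕ∞) P) (v : ℝ × ℝ) :
    ContDiff ℝ (⊤ : ℕ∞) (fun q => fderiv ℝ P q v) :=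
  (hP.fderiv_right (by simp)).clm_apply contDiff_const

lemma contDiff_dp {P : ℝ × ℝ → Mat} (hP : ContDiff ℝ (⊤ : ℕ∞) P) :
    ContDiff ℝ (⊤ : ℕ∞) (fun q => dp P q) := by
  unfold dp
  exact ((contDiff_fderiv_apply hP (1,0)).sub
    ((contDiff_fderiv_apply hP (0,1)).const_smul Complex.I)).const_smul ((2:ℂ)⁻¹)

lemma contDiff_dm {P : ℝ × ℝ → Mat} (hP : ContDiff ℝ (⊤ : ℕ∞) P) :
    ContDiff ℝ (⊤ : ℕ∞) (fun q => dm P q) := by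
  unfold dm
  exact ((contDiff_fderiv_apply hP (1,0)).add
    ((contDiff_fderiv_apply hP (0,1)).const_smul Complex.I)).const_smul ((2:ℂ)⁻¹)

lemma fderiv_fderiv_apply {P : ℝ × ℝ → Mat} (hP : ContDiff ℝ (⊤ : ℕ∞) P) (p v w : ℝ × ℝ) :
    fderiv ℝ (fun q => fderiv ℝ P q w) p v = fderiv ℝ (fderiv ℝ P) p v w := by
  have hD : DifferentiableAt ℝ (fderiv ℝ P) p :=
    ((hP.fderiv_right (m := 1) (WithTop.coe_le_coe.mpr le_top)).differentiable one_ne_zero) p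
  have h : HasFDerivAt (fun q => fderiv ℝ P q w)
      ((ContinuousLinearMap.apply ℝ Mat w).comp (fderiv ℝ (fderiv ℝ P) p)) p :=
    ((ContinuousLinearMap.apply ℝ Mat w).hasFDerivAt).comp p hD.hasFDerivAt
  erw [h.fderiv]; rfl

lemma fderiv_swap {P : ℝ × ℝ → Mat} (hP : ContDiff ℝ (⊤ : ℕ∞) P) (p v w : ℝ × ℝ) :
    fderiv ℝ (fun q => fderiv ℝ P q w) p v = fderiv ℝ (fun q => fderiv ℝ P q v) p w := by
  rw [fderiv_fderiv_apply hP p v w, fderiv_fderiv_apply hP p w v]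
  have hD : HasFDerivAt (fderiv ℝ P) (fderiv ℝ (fderiv ℝ P) p) p :=
    (((hP.fderiv_right (m := 1) (WithTop.coe_le_coe.mpr le_top)).differentiable one_ne_zero) p).hasFDerivAt
  exact second_derivative_symmetric (fun y => ((hP.differentiable (by simp)) y).hasFDerivAt) hD v w

lemma dp_dm_comm {P : ℝ × ℝ → Mat} (hP : ContDiff ℝ (⊤ : ℕ∞) P) (p : ℝ × ℝ) :
    dm (fun q => dp P q) p = dp (fun q => dm P q) p := by
  have d1 : DifferentiableAt ℝ (fun q => fderiv ℝ P q (1,0)) p :=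
    ((contDiff_fderiv_apply hP (1,0)).differentiable (by simp)) p
  have d2 : DifferentiableAt ℝ (fun q => fderiv ℝ P q (0,1)) p :=
    ((contDiff_fderiv_apply hP (0,1)).differentiable (by simp)) p
  have hdp : HasFDerivAt (fun q => dp P q)
      ((2:ℂ)⁻¹ • (fderiv ℝ (fun q => fderiv ℝ P q (1,0)) p -
        Complex.I • fderiv ℝ (fun q => fderiv ℝ P q (0,1)) p)) p := by
    exact ((d1.hasFDerivAt.sub (d2.hasFDerivAt.const_smul Complex.I)).const_smul ((2:ℂ)⁻¹))
  have hdm : HasFDerivAt (fun q => dm P q)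
      ((2:ℂ)⁻¹ • (fderiv ℝ (fun q => fderiv ℝ P q (1,0)) p +
        Complex.I • fderiv ℝ (fun q => fderiv ℝ P q (0,1)) p)) p := by
    exact ((d1.hasFDerivAt.add (d2.hasFDerivAt.const_smul Complex.I)).const_smul ((2:ℂ)⁻¹))
  have key1 : dm (fun q => dp P q) p = (2:ℂ)⁻¹ • (fderiv ℝ (fun q => dp P q) p (1,0) +
      Complex.I • fderiv ℝ (fun q => dp P q) p (0,1)) := rfl
  have key2 : dp (fun q => dm P q) p = (2:ℂ)⁻¹ • (fderiv ℝ (fun q => dm P q) p (1,0) -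
      Complex.I • fderiv ℝ (fun q => dm P q) p (0,1)) := rfl
  rw [key1, key2, hdp.fderiv, hdm.fderiv]
  simp only [ContinuousLinearMap.smul_apply, ContinuousLinearMap.sub_apply,
    ContinuousLinearMap.add_apply]
  rw [fderiv_swap hP p (0,1) (1,0)]
  module

lemma exe (b : Fin N) (X : Mat) :
    single b b 1 * X * single b b 1 = X b b • single b b 1 := by
  rw [Matrix.mul_assoc]
  ext i j
  by_cases hi : i = b
  · subst hi
    by_cases hj : j = i
    · subst hj
      simp
    · simp [Ne.symm hj, hj]
  · simp [hi, Ne.symm hi]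

lemma trace_mul_std (b : Fin N) (Q : Mat) :
    (Q * single b b 1).trace = Q b b := by
  rw [Matrix.trace, Finset.sum_eq_single b]
  · simp [Matrix.diag]
  · intro a _ ha
    simp [Matrix.diag, ha]
  · simp

open scoped ComplexOrder in
lemma eq_zero_of_trace_conjTranspose_mul_self {S : Mat} (h : (Sᴴ * S).trace = 0) : S = 0 := by
  have hnn : ∀ j : Fin N, 0 ≤ (Sᴴ * S) j j := by
    intro j
    simp only [Matrix.mul_apply, Matrix.conjTranspose_apply]
    exact Finset.sum_nonneg fun i _ => star_mul_self_nonneg _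
  have hdiag : ∀ j, (Sᴴ * S) j j = 0 := fun j =>
    (Finset.sum_eq_zero_iff_of_nonneg (fun i _ => hnn i)).mp h j (Finset.mem_univ j)
  ext i j
  have h2 : dotProduct (star fun i => S i j) (fun i => S i j) = 0 := by
    simpa [Matrix.mul_apply, Matrix.conjTranspose_apply, dotProduct] using hdiag j
  exact congrFun (dotProduct_star_self_eq_zero.mp h2) i

lemma rank_one_proj {Q : Mat} (hproj : Q * Q = Q) (hherm : Qᴴ = Q) (htr : Q.trace = 1)
    (M : Mat) : Q * M * Q = (Q * M).trace • Q := by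
  obtain ⟨b, hb⟩ : ∃ b, Q b b ≠ 0 := by
    by_contra h
    push_neg at h
    have : Q.trace = 0 := by simp [Matrix.trace, Matrix.diag, h]
    rw [htr] at this; exact one_ne_zero this
  have hcreal : star (Q b b) = Q b b := by
    conv_lhs => rw [← hherm]
    simp [Matrix.conjTranspose_apply, hherm]
  set c : ℂ := Q b b with hc
  have hQEQ : Q * single b b 1 * Q = c • Q := by
    set R : Mat := Q * single b b 1 * Q with hR
    have hQR : Q * R = R := by rw [hR, ← Matrix.mul_assoc, ← Matrix.mul_assoc, hproj]
    have hRQ : R * Q = R := by rw [hR, Matrix.mul_assoc, hproj]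
    have hRR : R * R = c • R := by
      calc R * R = Q * (single b b 1 * (Q * Q) * single b b 1) * Q := by
            rw [hR]; noncomm_ring
      _ = Q * (Q b b • single b b 1) * Q := by rw [hproj, exe]
      _ = c • R := by rw [← hc, hR]; simp only [Matrix.mul_smul, Matrix.smul_mul]
    have htrR : R.trace = c := by
      rw [hR, Matrix.trace_mul_cycle, hproj, trace_mul_std]
    set S : Mat := c • Q - R with hS
    have hSS : S * S = c • S := by
      rw [hS, sub_mul, mul_sub, mul_sub, hRR]
      simp only [Matrix.smul_mul, Matrix.mul_smul, hproj, hQR, hRQ, smul_smul]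
      module
    have htrS : S.trace = 0 := by
      rw [hS, Matrix.trace_sub, Matrix.trace_smul, htr, htrR]; simp
    have hSh : Sᴴ = S := by
      rw [hS, Matrix.conjTranspose_sub, Matrix.conjTranspose_smul, hR]
      simp only [Matrix.conjTranspose_mul, hherm]
      have hEh : (single b b (1:ℂ))ᴴ = single b b 1 := by
        ext i j
        simp [Matrix.conjTranspose_apply, Matrix.single, and_comm]
      rw [hEh, hcreal, ← Matrix.mul_assoc]
    have hS0 : S = 0 := by
      apply eq_zero_of_trace_conjTranspose_mul_self
      rw [hSh, hSS, Matrix.trace_smul, htrS]; simp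
    have h4 := sub_eq_zero.mp (by rw [← hS]; exact hS0)
    rw [← h4]
  have key : Q * M * Q = (c⁻¹ * (Q * M * Q) b b) • Q := by
    have h2 : Q = c⁻¹ • (Q * single b b 1 * Q) := by
      rw [hQEQ, smul_smul, inv_mul_cancel₀ hb, one_smul]
    have h1 : Q * M * Q = (c⁻¹ * c⁻¹) •
        (Q * (single b b 1 * (Q * M * Q) * single b b 1) * Q) := by
      calc Q * M * Q
          = (c⁻¹ • (Q * single b b 1 * Q)) * M *
            (c⁻¹ • (Q * single b b 1 * Q)) := by rw [← h2]
      _ = (c⁻¹ * c⁻¹) • ((Q * single b b 1 * Q) * M *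
            (Q * single b b 1 * Q)) := by
            rw [Matrix.smul_mul, Matrix.smul_mul, Matrix.mul_smul, smul_smul]
      _ = (c⁻¹ * c⁻¹) • (Q * (single b b 1 * (Q * M * Q) * single b b 1) * Q) := by
            congr 1
            noncomm_ring
    rw [exe] at h1
    conv_lhs => rw [h1]
    rw [Matrix.mul_smul, Matrix.smul_mul, hQEQ, smul_smul, smul_smul]
    congr 1
    field_simp
  have htrQMQ : (Q * M).trace = c⁻¹ * (Q * M * Q) b b := by
    have h3 : (Q * M * Q).trace = (Q * M).trace := by
      rw [Matrix.trace_mul_cycle, hproj]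
    have h5 : (Q * M * Q).trace = c⁻¹ * (Q * M * Q) b b := by
      conv_lhs => rw [key]
      rw [Matrix.trace_smul, htr, smul_eq_mul, mul_one]
    rw [← h3, h5]
  rw [key, htrQMQ]


lemma X_formula (Pm Dp Dm E F : Mat) (sp u w γ : ℂ) (hsp : sp ≠ 0)
    (hPP : Pm * Pm = Pm)
    (hEPm : E * Pm = u • Pm)
    (hDpDmPm : Dp * Dm * Pm = sp • Pm)
    (hDmDpPm : Dm * Dp * Pm = -((u + sp) • Pm))
    (hPFDm : Pm * (F * Dm) * Pm = w • Pm)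
    (hγ : γ * sp + sp⁻¹ * w = 0) :
    (γ • (Dm * Pm * Dp) + sp⁻¹ • ((E * Pm + Dm * Dp) * Dp + (Dm * Pm) * F)) *
      (sp⁻¹ • (Dm * Pm * Dp)) = -(Pm * Dp) := by
  set Ap : Mat := Dm * Pm * Dp with hAp
  have hDpAp : Dp * Ap = sp • (Pm * Dp) := by
    calc Dp * Ap = (Dp * Dm * Pm) * Dp := by rw [hAp]; noncomm_ring
    _ = sp • (Pm * Dp) := by rw [hDpDmPm, Matrix.smul_mul]
  have hAA : Ap * Ap = sp • Ap := by
    calc Ap * Ap = (Dm * Pm) * (Dp * Ap) := by rw [hAp]; noncomm_ring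
    _ = sp • ((Dm * Pm) * (Pm * Dp)) := by rw [hDpAp, Matrix.mul_smul]
    _ = sp • Ap := by rw [show (Dm * Pm) * (Pm * Dp) = Dm * (Pm * Pm) * Dp from by noncomm_ring,
          hPP, hAp]
  have ha : (E * Pm) * (Dp * Ap) = (sp * u) • (Pm * Dp) := by
    rw [hDpAp, Matrix.mul_smul, hEPm]
    rw [show (u • Pm) * (Pm * Dp) = u • (Pm * Pm * Dp) from by
      rw [Matrix.smul_mul]; noncomm_ring, hPP, smul_smul]
  have hb : (Dm * Dp) * (Dp * Ap) = -((sp * (u + sp)) • (Pm * Dp)) := by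
    rw [hDpAp, Matrix.mul_smul]
    rw [show (Dm * Dp) * (Pm * Dp) = (Dm * Dp * Pm) * Dp from by noncomm_ring, hDmDpPm]
    rw [Matrix.neg_mul, smul_neg, Matrix.smul_mul, smul_smul]
  have hc : (Dm * Pm) * F * Ap = w • Ap := by
    calc (Dm * Pm) * F * Ap = Dm * (Pm * (F * Dm) * Pm) * Dp := by rw [hAp]; noncomm_ring
    _ = w • Ap := by rw [hPFDm, Matrix.mul_smul, Matrix.smul_mul, hAp]
  have hdpAA : ((E * Pm + Dm * Dp) * Dp + (Dm * Pm) * F) * Ap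
      = (-(sp * sp)) • (Pm * Dp) + w • Ap := by
    calc ((E * Pm + Dm * Dp) * Dp + (Dm * Pm) * F) * Ap
        = (E * Pm) * (Dp * Ap) + (Dm * Dp) * (Dp * Ap) + (Dm * Pm) * F * Ap := by noncomm_ring
    _ = (sp * u) • (Pm * Dp) + -((sp * (u + sp)) • (Pm * Dp)) + w • Ap := by rw [ha, hb, hc]
    _ = (-(sp * sp)) • (Pm * Dp) + w • Ap := by
        rw [← neg_smul, ← add_smul]
        congr 1
        ring
  have expand : (γ • Ap + sp⁻¹ • ((E * Pm + Dm * Dp) * Dp + (Dm * Pm) * F)) * (sp⁻¹ • Ap)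
      = (sp⁻¹ * γ) • (Ap * Ap) +
        (sp⁻¹ * sp⁻¹) • ((((E * Pm + Dm * Dp) * Dp + (Dm * Pm) * F)) * Ap) := by
    rw [Matrix.mul_smul, Matrix.add_mul, Matrix.smul_mul, Matrix.smul_mul, smul_add,
      smul_smul, smul_smul]
  rw [expand, hAA, hdpAA]
  simp only [smul_add, smul_smul]
  have hw : γ * (sp * sp) + w = 0 := by
    have h2 := congrArg (fun z => sp * z) hγ
    simp only [mul_add, mul_zero] at h2
    calc γ * (sp * sp) + w = sp * (γ * sp) + (sp * sp⁻¹) * w := by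
          rw [mul_inv_cancel₀ hsp]; ring
    _ = 0 := by rw [mul_assoc]; linear_combination h2
  match_scalars
  · field_simp
    linear_combination hw
  · field_simp

lemma Y_formula (Pm Dp Dm E G : Mat) (sp u w' γ' : ℂ) (hsp : sp ≠ 0)
    (hPP : Pm * Pm = Pm)
    (hPmE : Pm * E = u • Pm)
    (hPmDpDm : Pm * (Dp * Dm) = sp • Pm)
    (hPmDmDp : Pm * (Dm * Dp) = -((u + sp) • Pm))
    (hPDpG : Pm * (Dp * G) * Pm = w' • Pm)
    (hγ' : γ' * sp + sp⁻¹ * w' = 0) :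
    (sp⁻¹ • (Dm * Pm * Dp)) *
      (γ' • (Dm * Pm * Dp) + sp⁻¹ • ((G * Pm + Dm * Dm) * Dp + (Dm * Pm) * E)) = -(Dm * Pm) := by
  set Ap : Mat := Dm * Pm * Dp with hAp
  have hAA : Ap * Ap = sp • Ap := by
    calc Ap * Ap = Dm * (Pm * (Dp * Dm)) * (Pm * Dp) := by rw [hAp]; noncomm_ring
    _ = sp • Ap := by
        rw [hPmDpDm, Matrix.mul_smul, Matrix.smul_mul]
        rw [show Dm * Pm * (Pm * Dp) = Dm * (Pm * Pm) * Dp from by noncomm_ring, hPP, hAp]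
  have hS1 : Ap * ((G * Pm) * Dp) = w' • Ap := by
    calc Ap * ((G * Pm) * Dp) = Dm * (Pm * (Dp * G) * Pm) * Dp := by rw [hAp]; noncomm_ring
    _ = w' • Ap := by rw [hPDpG, Matrix.mul_smul, Matrix.smul_mul, hAp]
  have hS2 : Ap * ((Dm * Dm) * Dp) = -((sp * (u + sp)) • (Dm * Pm)) := by
    calc Ap * ((Dm * Dm) * Dp) = Dm * (Pm * (Dp * Dm)) * (Dm * Dp) := by rw [hAp]; noncomm_ring
    _ = sp • (Dm * (Pm * (Dm * Dp))) := by
        rw [hPmDpDm, Matrix.mul_smul, Matrix.smul_mul]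
        rw [show Dm * Pm * (Dm * Dp) = Dm * (Pm * (Dm * Dp)) from by noncomm_ring]
    _ = -((sp * (u + sp)) • (Dm * Pm)) := by
        rw [hPmDmDp, Matrix.mul_neg, Matrix.mul_smul, smul_neg, smul_smul]
  have hS3 : Ap * ((Dm * Pm) * E) = (sp * u) • (Dm * Pm) := by
    calc Ap * ((Dm * Pm) * E) = Dm * (Pm * (Dp * Dm)) * (Pm * E) := by rw [hAp]; noncomm_ring
    _ = sp • (Dm * Pm * (Pm * E)) := by rw [hPmDpDm, Matrix.mul_smul, Matrix.smul_mul]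
    _ = (sp * u) • (Dm * Pm) := by
        rw [show Dm * Pm * (Pm * E) = Dm * (Pm * Pm) * E from by noncomm_ring, hPP]
        rw [show Dm * Pm * E = Dm * (Pm * E) from by noncomm_ring, hPmE, Matrix.mul_smul,
          smul_smul]
  have hAdmA : Ap * ((G * Pm + Dm * Dm) * Dp + (Dm * Pm) * E)
      = (-(sp * sp)) • (Dm * Pm) + w' • Ap := by
    calc Ap * ((G * Pm + Dm * Dm) * Dp + (Dm * Pm) * E)
        = Ap * ((G * Pm) * Dp) + Ap * ((Dm * Dm) * Dp) + Ap * ((Dm * Pm) * E) := by noncomm_ring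
    _ = w' • Ap + -((sp * (u + sp)) • (Dm * Pm)) + (sp * u) • (Dm * Pm) := by rw [hS1, hS2, hS3]
    _ = (-(sp * sp)) • (Dm * Pm) + w' • Ap := by module
  have expand : (sp⁻¹ • Ap) *
      (γ' • Ap + sp⁻¹ • ((G * Pm + Dm * Dm) * Dp + (Dm * Pm) * E))
      = (sp⁻¹ * γ') • (Ap * Ap) +
        (sp⁻¹ * sp⁻¹) • (Ap * ((G * Pm + Dm * Dm) * Dp + (Dm * Pm) * E)) := by
    rw [Matrix.smul_mul, Matrix.mul_add, Matrix.mul_smul, Matrix.mul_smul, smul_add,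
      smul_smul, smul_smul]
  rw [expand, hAA, hAdmA]
  simp only [smul_add, smul_smul]
  have hw : γ' * (sp * sp) + w' = 0 := by
    have h2 := congrArg (fun z => sp * z) hγ'
    simp only [mul_add, mul_zero] at h2
    calc γ' * (sp * sp) + w' = sp * (γ' * sp) + (sp * sp⁻¹) * w' := by
          rw [mul_inv_cancel₀ hsp]; ring
    _ = 0 := by rw [mul_assoc]; linear_combination h2
  match_scalars
  · field_simp
    linear_combination hw
  · field_simp


end CP

open MeasureTheory

/-- If `P` is a smooth rank-one Hermitian projector solution of the Euler–Lagrange equation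
with finite action, `s = trace(∂₋P·P·∂₊P)` is nowhere zero, `P' = Π₋P = (∂₋P·P·∂₊P)/s`, and
`trace(∂₊P'·P'·∂₋P')` is nowhere zero, then the raising and lowering operators are mutual
inverses: `Π₊(Π₋P) = P`. -/
theorem raising_lowering_mutual_inverses {N : ℕ} (P : ℝ × ℝ → Matrix (Fin N) (Fin N) ℂ)
    (hP : ContDiff ℝ (⊤ : ℕ∞) P)
    (hproj : ∀ p, P p * P p = P p)
    (hherm : ∀ p, (P p)ᴴ = P p)
    (htr : ∀ p, (P p).trace = 1)
    (hEL : ∀ p, dp (fun q => dm P q) p * P p - P p * dp (fun q => dm P q) p = 0)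
    (haction : Integrable (fun p => (dp P p * dm P p).trace) (volume : Measure (ℝ × ℝ)))
    (hs0 : ∀ p, (dm P p * P p * dp P p).trace ≠ 0)
    (P' : ℝ × ℝ → Matrix (Fin N) (Fin N) ℂ)
    (hP' : P' = fun p => ((dm P p * P p * dp P p).trace)⁻¹ • (dm P p * P p * dp P p))
    (ht0 : ∀ p, (dp P' p * P' p * dm P' p).trace ≠ 0) :
    ∀ p, ((dp P' p * P' p * dm P' p).trace)⁻¹ • (dp P' p * P' p * dm P' p) = P p := by
  intro p
  -- differentiability facts
  have hPd : ∀ q, DifferentiableAt ℝ P q := fun q => (hP.differentiable (by simp)) q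
  have hdpD : ∀ q, DifferentiableAt ℝ (fun r => dp P r) q :=
    fun q => ((CP.contDiff_dp hP).differentiable (by simp)) q
  have hdmD : ∀ q, DifferentiableAt ℝ (fun r => dm P r) q :=
    fun q => ((CP.contDiff_dm hP).differentiable (by simp)) q
  have hABd : ∀ q, DifferentiableAt ℝ (fun r => dm P r * P r) q :=
    fun q => CP.diffAt_mul (hdmD q) (hPd q)
  have hAd : ∀ q, DifferentiableAt ℝ (fun r => dm P r * P r * dp P r) q :=
    fun q => CP.diffAt_mul (hABd q) (hdpD q)
  have hsd : ∀ q, DifferentiableAt ℝ (fun r => (dm P r * P r * dp P r).trace) q :=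
    fun q => CP.diffAt_trace (hAd q)
  have hsi : ∀ q, DifferentiableAt ℝ (fun r => ((dm P r * P r * dp P r).trace)⁻¹) q :=
    fun q => (hsd q).inv (hs0 q)
  have hPBd : ∀ q, DifferentiableAt ℝ (fun r => P r * dp P r) q :=
    fun q => CP.diffAt_mul (hPd q) (hdpD q)
  have hPCd : ∀ q, DifferentiableAt ℝ (fun r => P r * dm P r) q :=
    fun q => CP.diffAt_mul (hPd q) (hdmD q)
  -- first order projector identities
  have hDp3 : ∀ q, dp P q = dp P q * P q + P q * dp P q := by
    intro q
    have h : dp (fun r => P r * P r) q = dp P q * P q + P q * dp P q :=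
      CP.dp_mul (hPd q) (hPd q)
    rwa [show (fun r => P r * P r) = P from funext hproj] at h
  have hDm3 : ∀ q, dm P q = dm P q * P q + P q * dm P q := by
    intro q
    have h : dm (fun r => P r * P r) q = dm P q * P q + P q * dm P q :=
      CP.dm_mul (hPd q) (hPd q)
    rwa [show (fun r => P r * P r) = P from funext hproj] at h
  have hPDpP : ∀ q, P q * dp P q * P q = 0 := by
    intro q
    have h : P q * dp P q * P q = P q * dp P q * P q + P q * dp P q * P q := by
      calc P q * dp P q * P q = P q * (dp P q * P q + P q * dp P q) * P q := by
            conv_lhs => rw [hDp3 q]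
      _ = P q * dp P q * (P q * P q) + (P q * P q) * dp P q * P q := by noncomm_ring
      _ = P q * dp P q * P q + P q * dp P q * P q := by rw [hproj q]
    exact add_eq_left.mp h.symm
  have hPDmP : ∀ q, P q * dm P q * P q = 0 := by
    intro q
    have h : P q * dm P q * P q = P q * dm P q * P q + P q * dm P q * P q := by
      calc P q * dm P q * P q = P q * (dm P q * P q + P q * dm P q) * P q := by
            conv_lhs => rw [hDm3 q]
      _ = P q * dm P q * (P q * P q) + (P q * P q) * dm P q * P q := by noncomm_ring
      _ = P q * dm P q * P q + P q * dm P q * P q := by rw [hproj q]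
    exact add_eq_left.mp h.symm
  -- rank one property at p
  have rank1 : ∀ M, P p * M * P p = (P p * M).trace • P p :=
    fun M => CP.rank_one_proj (hproj p) (hherm p) (htr p) M
  -- Euler-Lagrange at p
  have hEc : dp (fun q => dm P q) p * P p = P p * dp (fun q => dm P q) p :=
    sub_eq_zero.mp (hEL p)
  have hPmE : P p * dp (fun q => dm P q) p
      = (P p * dp (fun q => dm P q) p).trace • P p := by
    calc P p * dp (fun q => dm P q) p
        = (P p * P p) * dp (fun q => dm P q) p := by rw [hproj p]
    _ = P p * (P p * dp (fun q => dm P q) p) := by rw [Matrix.mul_assoc]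
    _ = P p * (dp (fun q => dm P q) p * P p) := by rw [← hEc]
    _ = P p * dp (fun q => dm P q) p * P p := by rw [Matrix.mul_assoc]
    _ = (P p * dp (fun q => dm P q) p).trace • P p := rank1 _
  have hEPm : dp (fun q => dm P q) p * P p
      = (P p * dp (fun q => dm P q) p).trace • P p := by rw [hEc]; exact hPmE
  -- trace of s in cyclic form
  have htrc : (P p * (dp P p * dm P p)).trace = (dm P p * P p * dp P p).trace := by
    rw [Matrix.trace_mul_cycle', ← Matrix.mul_assoc]
  have h6 : P p * (dp P p * dm P p) * P p = (dm P p * P p * dp P p).trace • P p := by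
    rw [rank1, htrc]
  have h6r : dp P p * dm P p * P p = (dm P p * P p * dp P p).trace • P p := by
    calc dp P p * dm P p * P p
        = (dp P p * P p + P p * dp P p) * dm P p * P p := by conv_lhs => rw [hDp3 p]
    _ = dp P p * (P p * dm P p * P p) + P p * (dp P p * dm P p) * P p := by noncomm_ring
    _ = (dm P p * P p * dp P p).trace • P p := by
        rw [hPDmP p, h6, Matrix.mul_zero, zero_add]
  have h6l : P p * (dp P p * dm P p) = (dm P p * P p * dp P p).trace • P p := by
    calc P p * (dp P p * dm P p)
        = P p * (dp P p * (dm P p * P p + P p * dm P p)) := by conv_lhs => rw [hDm3 p]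
    _ = P p * (dp P p * dm P p) * P p + (P p * dp P p * P p) * dm P p := by noncomm_ring
    _ = (dm P p * P p * dp P p).trace • P p := by
        rw [hPDpP p, h6, Matrix.zero_mul, add_zero]
  -- Clairaut
  have hcl : dm (fun q => dp P q) p = dp (fun q => dm P q) p := CP.dp_dm_comm hP p
  -- second-derivative identities
  have hz1 : dm (fun q => P q * dp P q * P q) p = 0 := by
    rw [show (fun q => P q * dp P q * P q) = (fun _ => (0 : Matrix (Fin N) (Fin N) ℂ))
      from funext hPDpP]
    simp [dm]
  have he1 : dm (fun q => P q * dp P q * P q) p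
      = dm (fun q => P q * dp P q) p * P p + (P p * dp P p) * dm P p :=
    CP.dm_mul (hPBd p) (hPd p)
  have he2 : dm (fun q => P q * dp P q) p
      = dm P p * dp P p + P p * dm (fun q => dp P q) p :=
    CP.dm_mul (hPd p) (hdpD p)
  have hkey1 : dm P p * dp P p * P p + P p * dp (fun q => dm P q) p * P p
      + P p * (dp P p * dm P p) = 0 := by
    have h0 := hz1
    rw [he1, he2, hcl] at h0
    calc dm P p * dp P p * P p + P p * dp (fun q => dm P q) p * P p
        + P p * (dp P p * dm P p)
        = (dm P p * dp P p + P p * dp (fun q => dm P q) p) * P p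
          + (P p * dp P p) * dm P p := by noncomm_ring
    _ = 0 := h0
  have hDmDpPm : dm P p * dp P p * P p
      = -(((P p * dp (fun q => dm P q) p).trace + (dm P p * P p * dp P p).trace) • P p) := by
    have h1 := hkey1
    rw [rank1 (dp (fun q => dm P q) p), h6l] at h1
    rw [add_assoc] at h1
    have h2 := eq_neg_of_add_eq_zero_left h1
    rw [h2, ← add_smul]
  have hz2 : dp (fun q => P q * dm P q * P q) p = 0 := by
    rw [show (fun q => P q * dm P q * P q) = (fun _ => (0 : Matrix (Fin N) (Fin N) ℂ))
      from funext hPDmP]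
    simp [dp]
  have he1' : dp (fun q => P q * dm P q * P q) p
      = dp (fun q => P q * dm P q) p * P p + (P p * dm P p) * dp P p :=
    CP.dp_mul (hPCd p) (hPd p)
  have he2' : dp (fun q => P q * dm P q) p
      = dp P p * dm P p + P p * dp (fun q => dm P q) p :=
    CP.dp_mul (hPd p) (hdmD p)
  have hkey2 : dp P p * dm P p * P p + P p * dp (fun q => dm P q) p * P p
      + P p * (dm P p * dp P p) = 0 := by
    have h0 := hz2
    rw [he1', he2'] at h0
    calc dp P p * dm P p * P p + P p * dp (fun q => dm P q) p * P p
        + P p * (dm P p * dp P p)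
        = (dp P p * dm P p + P p * dp (fun q => dm P q) p) * P p
          + (P p * dm P p) * dp P p := by noncomm_ring
    _ = 0 := h0
  have hPmDmDp : P p * (dm P p * dp P p)
      = -(((P p * dp (fun q => dm P q) p).trace + (dm P p * P p * dp P p).trace) • P p) := by
    have h1 := hkey2
    rw [rank1 (dp (fun q => dm P q) p), h6r] at h1
    have h2 := eq_neg_of_add_eq_zero_right h1
    rw [h2, ← add_smul, add_comm ((dm P p * P p * dp P p).trace)]
  -- basic traces
  have htrPDp : (P p * dp P p).trace = 0 := by
    have h := congrArg Matrix.trace (hPDpP p)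
    rwa [Matrix.trace_mul_cycle, hproj p, Matrix.trace_zero] at h
  have htrPDm : (P p * dm P p).trace = 0 := by
    have h := congrArg Matrix.trace (hPDmP p)
    rwa [Matrix.trace_mul_cycle, hproj p, Matrix.trace_zero] at h
  have htrDmPm : (dm P p * P p).trace = 0 := by
    rw [Matrix.trace_mul_comm]; exact htrPDm
  have htrEPmDp : ((dp (fun q => dm P q) p * P p) * dp P p).trace = 0 := by
    rw [hEPm, Matrix.smul_mul, Matrix.trace_smul, htrPDp, smul_zero]
  have htrDmDpDp : ((dm P p * dp P p) * dp P p).trace = 0 := by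
    have e : (dm P p * dp P p) * dp P p
        = (P p * (dm P p * dp P p)) * dp P p + ((dm P p * P p) * dp P p) * dp P p := by
      conv_lhs => rw [hDm3 p]
      noncomm_ring
    rw [e, Matrix.trace_add]
    have t1 : ((P p * (dm P p * dp P p)) * dp P p).trace = 0 := by
      rw [hPmDmDp, Matrix.neg_mul, Matrix.trace_neg, Matrix.smul_mul, Matrix.trace_smul,
        htrPDp, smul_zero, neg_zero]
    have t2 : (((dm P p * P p) * dp P p) * dp P p).trace = 0 := by
      rw [Matrix.trace_mul_comm]
      rw [show dp P p * ((dm P p * P p) * dp P p) = (dp P p * dm P p * P p) * dp P p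
        from by noncomm_ring]
      rw [h6r, Matrix.smul_mul, Matrix.trace_smul, htrPDp, smul_zero]
    rw [t1, t2, add_zero]
  have htrDmDmDp : ((dm P p * dm P p) * dp P p).trace = 0 := by
    have e : (dm P p * dm P p) * dp P p
        = dm P p * (P p * (dm P p * dp P p)) + (dm P p * (dm P p * P p)) * dp P p := by
      nth_rewrite 2 [hDm3 p]
      noncomm_ring
    rw [e, Matrix.trace_add]
    have t1 : (dm P p * (P p * (dm P p * dp P p))).trace = 0 := by
      rw [hPmDmDp, Matrix.mul_neg, Matrix.trace_neg, Matrix.mul_smul, Matrix.trace_smul,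
        htrDmPm, smul_zero, neg_zero]
    have t2 : ((dm P p * (dm P p * P p)) * dp P p).trace = 0 := by
      rw [Matrix.trace_mul_comm]
      rw [show dp P p * (dm P p * (dm P p * P p)) = (dp P p * dm P p * dm P p) * P p
        from by noncomm_ring]
      rw [Matrix.trace_mul_comm]
      rw [show P p * (dp P p * dm P p * dm P p) = (P p * (dp P p * dm P p)) * dm P p
        from by noncomm_ring]
      rw [h6l, Matrix.smul_mul, Matrix.trace_smul, htrPDm, smul_zero]
    rw [t1, t2, add_zero]
  have htrDmPmE : ((dm P p * P p) * dp (fun q => dm P q) p).trace = 0 := by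
    rw [Matrix.mul_assoc, hPmE, Matrix.mul_smul, Matrix.trace_smul, htrDmPm, smul_zero]
  -- first derivative of A
  have h1A : dp (fun q => dm P q * P q * dp P q) p
      = dp (fun q => dm P q * P q) p * dp P p
        + (dm P p * P p) * dp (fun q => dp P q) p :=
    CP.dp_mul (hABd p) (hdpD p)
  have h2A : dp (fun q => dm P q * P q) p
      = dp (fun q => dm P q) p * P p + dm P p * dp P p :=
    CP.dp_mul (hdmD p) (hPd p)
  have h1B : dm (fun q => dm P q * P q * dp P q) p
      = dm (fun q => dm P q * P q) p * dp P p
        + (dm P p * P p) * dm (fun q => dp P q) p :=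
    CP.dm_mul (hABd p) (hdpD p)
  have h2B : dm (fun q => dm P q * P q) p
      = dm (fun q => dm P q) p * P p + dm P p * dm P p :=
    CP.dm_mul (hdmD p) (hPd p)
  -- scalar derivatives of s
  have hwp : CP.dpc (fun q => (dm P q * P q * dp P q).trace) p
      = (P p * (dp (fun q => dp P q) p * dm P p)).trace := by
    rw [CP.dpc_trace (hAd p), h1A, h2A]
    rw [Matrix.add_mul, Matrix.trace_add, Matrix.trace_add]
    rw [htrEPmDp, htrDmDpDp, zero_add, zero_add]
    rw [Matrix.trace_mul_comm]
    rw [show dp (fun q => dp P q) p * (dm P p * P p)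
      = (dp (fun q => dp P q) p * dm P p) * P p from by noncomm_ring]
    rw [Matrix.trace_mul_comm]
  have hwm : CP.dmc (fun q => (dm P q * P q * dp P q).trace) p
      = (P p * (dp P p * dm (fun q => dm P q) p)).trace := by
    rw [CP.dmc_trace (hAd p), h1B, h2B, hcl]
    rw [Matrix.add_mul, Matrix.trace_add, Matrix.trace_add]
    rw [htrDmDmDp, htrDmPmE, add_zero, add_zero]
    rw [Matrix.trace_mul_cycle, Matrix.trace_mul_comm]
  -- derivative of 1/s
  have hprod1 : (fun q => ((dm P q * P q * dp P q).trace)⁻¹ * (dm P q * P q * dp P q).trace)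
      = (fun _ : ℝ × ℝ => (1 : ℂ)) := funext fun q => inv_mul_cancel₀ (hs0 q)
  have hc1p : CP.dpc (fun _ : ℝ × ℝ => (1 : ℂ)) p = 0 := by simp [CP.dpc]
  have hc1m : CP.dmc (fun _ : ℝ × ℝ => (1 : ℂ)) p = 0 := by simp [CP.dmc]
  have hγrel : CP.dpc (fun q => ((dm P q * P q * dp P q).trace)⁻¹) p
        * (dm P p * P p * dp P p).trace
      + ((dm P p * P p * dp P p).trace)⁻¹
        * (P p * (dp (fun q => dp P q) p * dm P p)).trace = 0 := by
    have h : CP.dpc (fun q => ((dm P q * P q * dp P q).trace)⁻¹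
          * (dm P q * P q * dp P q).trace) p
        = CP.dpc (fun q => ((dm P q * P q * dp P q).trace)⁻¹) p
            * (dm P p * P p * dp P p).trace
          + ((dm P p * P p * dp P p).trace)⁻¹
            * CP.dpc (fun q => (dm P q * P q * dp P q).trace) p :=
      CP.dpc_mul (hsi p) (hsd p)
    rw [hprod1, hc1p, hwp] at h
    exact h.symm
  have hγ'rel : CP.dmc (fun q => ((dm P q * P q * dp P q).trace)⁻¹) p
        * (dm P p * P p * dp P p).trace
      + ((dm P p * P p * dp P p).trace)⁻¹
        * (P p * (dp P p * dm (fun q => dm P q) p)).trace = 0 := by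
    have h : CP.dmc (fun q => ((dm P q * P q * dp P q).trace)⁻¹
          * (dm P q * P q * dp P q).trace) p
        = CP.dmc (fun q => ((dm P q * P q * dp P q).trace)⁻¹) p
            * (dm P p * P p * dp P p).trace
          + ((dm P p * P p * dp P p).trace)⁻¹
            * CP.dmc (fun q => (dm P q * P q * dp P q).trace) p :=
      CP.dmc_mul (hsi p) (hsd p)
    rw [hprod1, hc1m, hwm] at h
    exact h.symm
  -- derivatives of P'
  have hP'p : ∀ q, P' q = ((dm P q * P q * dp P q).trace)⁻¹ • (dm P q * P q * dp P q) :=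
    fun q => by rw [hP']
  have hdpP' : dp P' p
      = CP.dpc (fun q => ((dm P q * P q * dp P q).trace)⁻¹) p • (dm P p * P p * dp P p)
        + ((dm P p * P p * dp P p).trace)⁻¹
          • ((dp (fun q => dm P q) p * P p + dm P p * dp P p) * dp P p
            + (dm P p * P p) * dp (fun q => dp P q) p) := by
    calc dp P' p
        = dp (fun q => ((dm P q * P q * dp P q).trace)⁻¹ • (dm P q * P q * dp P q)) p := by
          rw [hP']
    _ = CP.dpc (fun q => ((dm P q * P q * dp P q).trace)⁻¹) p • (dm P p * P p * dp P p)
        + ((dm P p * P p * dp P p).trace)⁻¹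
          • dp (fun q => dm P q * P q * dp P q) p := CP.dp_smul (hsi p) (hAd p)
    _ = _ := by rw [h1A, h2A]
  have hdmP' : dm P' p
      = CP.dmc (fun q => ((dm P q * P q * dp P q).trace)⁻¹) p • (dm P p * P p * dp P p)
        + ((dm P p * P p * dp P p).trace)⁻¹
          • ((dm (fun q => dm P q) p * P p + dm P p * dm P p) * dp P p
            + (dm P p * P p) * dp (fun q => dm P q) p) := by
    calc dm P' p
        = dm (fun q => ((dm P q * P q * dp P q).trace)⁻¹ • (dm P q * P q * dp P q)) p := by
          rw [hP']
    _ = CP.dmc (fun q => ((dm P q * P q * dp P q).trace)⁻¹) p • (dm P p * P p * dp P p)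
        + ((dm P p * P p * dp P p).trace)⁻¹
          • dm (fun q => dm P q * P q * dp P q) p := CP.dm_smul (hsi p) (hAd p)
    _ = _ := by rw [h1B, h2B, hcl]
  -- the two main formulas
  have hX : dp P' p * P' p = -(P p * dp P p) := by
    rw [hdpP', hP'p p]
    exact CP.X_formula (P p) (dp P p) (dm P p) (dp (fun q => dm P q) p)
      (dp (fun q => dp P q) p) ((dm P p * P p * dp P p).trace)
      ((P p * dp (fun q => dm P q) p).trace)
      ((P p * (dp (fun q => dp P q) p * dm P p)).trace)
      (CP.dpc (fun q => ((dm P q * P q * dp P q).trace)⁻¹) p)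
      (hs0 p) (hproj p) hEPm h6r hDmDpPm (rank1 _) hγrel
  have hY : P' p * dm P' p = -(dm P p * P p) := by
    rw [hdmP', hP'p p]
    exact CP.Y_formula (P p) (dp P p) (dm P p) (dp (fun q => dm P q) p)
      (dm (fun q => dm P q) p) ((dm P p * P p * dp P p).trace)
      ((P p * dp (fun q => dm P q) p).trace)
      ((P p * (dp P p * dm (fun q => dm P q) p)).trace)
      (CP.dmc (fun q => ((dm P q * P q * dp P q).trace)⁻¹) p)
      (hs0 p) (hproj p) hPmE h6l hPmDmDp (rank1 _) hγ'rel
  -- idempotence of P' at p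
  have hAA : (dm P p * P p * dp P p) * (dm P p * P p * dp P p)
      = (dm P p * P p * dp P p).trace • (dm P p * P p * dp P p) := by
    calc (dm P p * P p * dp P p) * (dm P p * P p * dp P p)
        = dm P p * (P p * (dp P p * dm P p)) * (P p * dp P p) := by noncomm_ring
    _ = (dm P p * P p * dp P p).trace • (dm P p * P p * dp P p) := by
        rw [h6l, Matrix.mul_smul, Matrix.smul_mul]
        rw [show dm P p * P p * (P p * dp P p) = dm P p * (P p * P p) * dp P p
          from by noncomm_ring, hproj p]
  have hidem : P' p * P' p = P' p := by
    rw [hP'p p, Matrix.smul_mul, Matrix.mul_smul, hAA, smul_smul, smul_smul]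
    congr 1
    field_simp
  -- conclusion
  have hT : dp P' p * P' p * dm P' p = (dm P p * P p * dp P p).trace • P p := by
    have hmid : dp P' p * P' p * dm P' p = dp P' p * (P' p * P' p) * dm P' p := by
      rw [hidem]
    rw [hmid]
    rw [show dp P' p * (P' p * P' p) * dm P' p
      = (dp P' p * P' p) * (P' p * dm P' p) from by noncomm_ring]
    rw [hX, hY, Matrix.neg_mul, Matrix.mul_neg, neg_neg]
    rw [show (P p * dp P p) * (dm P p * P p) = P p * (dp P p * dm P p) * P p
      from by noncomm_ring, h6]
  rw [hT, Matrix.trace_smul, htr p, smul_eq_mul, mul_one, smul_smul,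
    inv_mul_cancel₀ (hs0 p), one_smul]
end
end

section
/- Let f : ℂ → ℂᴺ be holomorphic and nowhere vanishing, let P(ξ) = (f(ξ)·f(ξ)†)/(f(ξ)†·f(ξ)), viewed as a smooth map ℝ² → Matrix (Fin N) (Fin N) ℂ via ξ₊ = x + iy, and let λ ∈ ℂ with λ ≠ ±1. Define U¹ = (2/(1+λ))[∂₊P, P] and U² = (2/(1−λ))[∂₋P, P]. Then the wave function Φ := I − (2/(1−λ))·P satisfies the linear spectral problem ∂₊Φ = U¹·Φ and ∂₋Φ = U²·Φ at every point. -/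
/-!
Write `s = f†f`, so that `P = s⁻¹ f f†`. Since `f` is holomorphic, `∂₋f = 0` and `∂₊f† = 0`, and the
product rule gives `∂₊P = s⁻¹ (I − P) f′ f†` and `∂₋P = s⁻¹ f f′† (I − P)`. As `P` is idempotent
and `f† P = f†`, `P f = f`, this yields `∂₊P·P = ∂₊P`, `P·∂₊P = 0`, `∂₋P·P = 0`, `P·∂₋P = ∂₋P`,
hence `[∂₊P, P] = ∂₊P` and `[∂₋P, P] = −∂₋P`. With `c = 2/(1−λ)` we have `∂±Φ = −c ∂±P`; the
`∂₋`-equation then follows from `∂₋P·P = 0`, and the `∂₊`-equation reduces to the scalar identity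
`(2/(1+λ))(1 − c) = −c`.

The derivatives are computed in a small Wirtinger calculus: `g` has Wirtinger derivatives `(a, b)`
at `p` when its real derivative is `v ↦ ξ(v)•a + conj(ξ(v))•b`, where `ξ(x, y) = x + iy`; this
notion is stable under conjugation, inversion and ℂ-bilinear products.
-/

open Matrix

noncomputable section

attribute [local instance] Matrix.normedAddCommGroup Matrix.normedSpace

def complexCoord : ℝ × ℝ →L[ℝ] ℂ := Complex.equivRealProdCLM.symm.toContinuousLinearMap

@[simp]
lemma complexCoord_apply (q : ℝ × ℝ) : complexCoord q = q.1 + q.2 * Complex.I :=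
  Complex.equivRealProdCLM_symm_apply q

section Wirtinger

variable {E F G : Type*}
  [NormedAddCommGroup E] [NormedSpace ℂ E] [NormedSpace ℝ E] [IsScalarTower ℝ ℂ E]
  [NormedAddCommGroup F] [NormedSpace ℂ F] [NormedSpace ℝ F] [IsScalarTower ℝ ℂ F]
  [NormedAddCommGroup G] [NormedSpace ℂ G] [NormedSpace ℝ G] [IsScalarTower ℝ ℂ G]

def wirtingerCLM (a b : E) : ℝ × ℝ →L[ℝ] E :=
  complexCoord.smulRight a + (Complex.conjCLE.toContinuousLinearMap ∘L complexCoord).smulRight b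

@[simp]
lemma wirtingerCLM_apply (a b : E) (v : ℝ × ℝ) :
    wirtingerCLM a b v = complexCoord v • a + (starRingEnd ℂ) (complexCoord v) • b := rfl

def HasWirtingerDerivAt (g : ℝ × ℝ → E) (a b : E) (p : ℝ × ℝ) : Prop :=
  HasFDerivAt g (wirtingerCLM a b) p

theorem HasWirtingerDerivAt.fderiv_apply {g : ℝ × ℝ → E} {a b : E} {p : ℝ × ℝ}
    (h : HasWirtingerDerivAt g a b p) (v : ℝ × ℝ) :
    fderiv ℝ g p v = complexCoord v • a + (starRingEnd ℂ) (complexCoord v) • b := by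
  rw [h.fderiv, wirtingerCLM_apply]

/- `rw [h.fderiv]` fails in `dp P p`: `dp` carries the instances found directly on matrices, which
agree with the generic ones of `h` only after unfolding, so the rewriting is done through `trans`. -/
theorem HasWirtingerDerivAt.dp_eq {N : ℕ} {P : ℝ × ℝ → Matrix (Fin N) (Fin N) ℂ}
    {a b : Matrix (Fin N) (Fin N) ℂ} {p : ℝ × ℝ} (h : HasWirtingerDerivAt P a b p) :
    dp P p = a := by
  refine (congrArg₂ (fun x y => (2 : ℂ)⁻¹ • (x - Complex.I • y))
    (h.fderiv_apply (1, 0)) (h.fderiv_apply (0, 1))).trans ?_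
  simp [Complex.conj_I, smul_smul]
  module

theorem HasWirtingerDerivAt.dm_eq {N : ℕ} {P : ℝ × ℝ → Matrix (Fin N) (Fin N) ℂ}
    {a b : Matrix (Fin N) (Fin N) ℂ} {p : ℝ × ℝ} (h : HasWirtingerDerivAt P a b p) :
    dm P p = b := by
  refine (congrArg₂ (fun x y => (2 : ℂ)⁻¹ • (x + Complex.I • y))
    (h.fderiv_apply (1, 0)) (h.fderiv_apply (0, 1))).trans ?_
  simp [Complex.conj_I, smul_smul]
  module

theorem HasDerivAt.hasWirtingerDerivAt_comp {f : ℂ → E} {a : E} {p : ℝ × ℝ}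
    (hf : HasDerivAt f a (complexCoord p)) :
    HasWirtingerDerivAt (fun q => f (complexCoord q)) a 0 p := by
  refine ((hf.hasFDerivAt.restrictScalars ℝ).comp p complexCoord.hasFDerivAt).congr_fderiv ?_
  ext <;> simp

theorem HasWirtingerDerivAt.star [StarAddMonoid E] [StarModule ℂ E] [StarModule ℝ E]
    [ContinuousStar E] {g : ℝ × ℝ → E} {a b : E} {p : ℝ × ℝ} (h : HasWirtingerDerivAt g a b p) :
    HasWirtingerDerivAt (fun q => star (g q)) (star b) (star a) p := by
  refine (HasFDerivAt.star h).congr_fderiv ?_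
  ext <;> simp [star_smul, add_comm]

theorem HasWirtingerDerivAt.const_smul {g : ℝ × ℝ → E} {a b : E} {p : ℝ × ℝ}
    (h : HasWirtingerDerivAt g a b p) (c : ℂ) :
    HasWirtingerDerivAt (fun q => c • g q) (c • a) (c • b) p := by
  refine (HasFDerivAt.const_smul h c).congr_fderiv ?_
  ext <;> simp [smul_comm c]

theorem HasWirtingerDerivAt.const_sub {g : ℝ × ℝ → E} {a b : E} {p : ℝ × ℝ}
    (h : HasWirtingerDerivAt g a b p) (c : E) :
    HasWirtingerDerivAt (fun q => c - g q) (-a) (-b) p := by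
  refine (HasFDerivAt.const_sub h c).congr_fderiv ?_
  ext <;> simp <;> abel

theorem HasWirtingerDerivAt.inv {s : ℝ × ℝ → ℂ} {a b : ℂ} {p : ℝ × ℝ}
    (h : HasWirtingerDerivAt s a b p) (hs : s p ≠ 0) :
    HasWirtingerDerivAt (fun q => (s q)⁻¹) (-(a / s p ^ 2)) (-(b / s p ^ 2)) p := by
  refine ((hasFDerivAt_inv' (𝕜 := ℝ) hs).comp p h).congr_fderiv ?_
  ext <;> simp <;> ring

theorem LinearMap.hasWirtingerDerivAt_of_bilinear [FiniteDimensional ℂ E] [FiniteDimensional ℂ F]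
    (B : E →ₗ[ℂ] F →ₗ[ℂ] G) {u : ℝ × ℝ → E} {v : ℝ × ℝ → F} {a b : E} {c d : F} {p : ℝ × ℝ}
    (hu : HasWirtingerDerivAt u a b p) (hv : HasWirtingerDerivAt v c d p) :
    HasWirtingerDerivAt (fun q => B (u q) (v q)) (B a (v p) + B (u p) c)
      (B b (v p) + B (u p) d) p := by
  let Bc : E →L[ℂ] F →L[ℂ] G :=
    LinearMap.toContinuousLinearMap (LinearMap.toContinuousLinearMap.toLinearMap ∘ₗ B)
  refine ((Bc.bilinearRestrictScalars ℝ).hasFDerivAt_of_bilinear hu hv).congr_fderiv ?_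
  ext <;> simp [Bc] <;> module

end Wirtinger

open scoped ComplexOrder in
theorem star_dotProduct_self_ne_zero_s11 {ι : Type*} [Fintype ι] {u : ι → ℂ} (hu : u ≠ 0) :
    star u ⬝ᵥ u ≠ 0 :=
  dotProduct_star_self_eq_zero.not.mpr hu

section LineProjector

variable {ι : Type*} [Fintype ι]

def lineProjector (u : ι → ℂ) : Matrix ι ι ℂ := (star u ⬝ᵥ u)⁻¹ • vecMulVec u (star u)

theorem vecMulVec_star_mul_lineProjector {u : ι → ℂ} (hu : u ≠ 0) (w : ι → ℂ) :
    vecMulVec w (star u) * lineProjector u = vecMulVec w (star u) := by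
  rw [lineProjector, mul_smul_comm, vecMulVec_mul_vecMulVec, vecMulVec_smul, smul_smul,
    inv_mul_cancel₀ (star_dotProduct_self_ne_zero_s11 hu), one_smul]

theorem lineProjector_mul_vecMulVec {u : ι → ℂ} (hu : u ≠ 0) (w : ι → ℂ) :
    lineProjector u * vecMulVec u w = vecMulVec u w := by
  rw [lineProjector, smul_mul_assoc, vecMulVec_mul_vecMulVec, vecMulVec_smul, smul_smul,
    inv_mul_cancel₀ (star_dotProduct_self_ne_zero_s11 hu), one_smul]

theorem isIdempotentElem_lineProjector {u : ι → ℂ} (hu : u ≠ 0) :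
    IsIdempotentElem (lineProjector u) := by
  change lineProjector u * ((star u ⬝ᵥ u)⁻¹ • vecMulVec u (star u)) = lineProjector u
  rw [mul_smul_comm, lineProjector_mul_vecMulVec hu, lineProjector]

theorem hasWirtingerDerivAt_lineProjector [DecidableEq ι] {u : ℝ × ℝ → ι → ℂ} {w : ι → ℂ} {p : ℝ × ℝ}
    (hu : HasWirtingerDerivAt u w 0 p) (hu0 : u p ≠ 0) :
    HasWirtingerDerivAt (fun q => lineProjector (u q))
      ((star (u p) ⬝ᵥ u p)⁻¹ • ((1 - lineProjector (u p)) * vecMulVec w (star (u p))))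
      ((star (u p) ⬝ᵥ u p)⁻¹ • (vecMulVec (u p) (star w) * (1 - lineProjector (u p)))) p := by
  have hs := ((dotProductBilin ℂ ℂ).hasWirtingerDerivAt_of_bilinear hu.star hu).inv
    (star_dotProduct_self_ne_zero_s11 hu0)
  have hM := (vecMulVecBilin ℂ ℂ).hasWirtingerDerivAt_of_bilinear hu hu.star
  convert (LinearMap.lsmul ℂ (Matrix ι ι ℂ)).hasWirtingerDerivAt_of_bilinear hs hM using 1
  · rfl
  all_goals
    simp only [LinearMap.lsmul_apply, dotProductBilin_apply_apply, vecMulVecBilin_apply_apply,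
      star_zero, zero_dotProduct, dotProduct_zero, vecMulVec_zero, zero_vecMulVec, add_zero,
      zero_add, sub_mul, mul_sub, one_mul, mul_one, lineProjector, smul_mul_assoc, mul_smul_comm,
      vecMulVec_mul_vecMulVec, vecMulVec_smul, smul_sub, smul_smul]
    have hs0 := star_dotProduct_self_ne_zero_s11 hu0
    match_scalars <;> field_simp

end LineProjector

theorem projOf_eq_lineProjector_comp {N : ℕ} (f : ℂ → Fin N → ℂ) :
    projOf f = fun q => lineProjector (f (complexCoord q)) := by
  ext1 q
  simp only [projOf, lineProjector, complexCoord_apply]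

theorem exists_hasWirtingerDerivAt_projOf {N : ℕ} {f : ℂ → Fin N → ℂ} (hf : Differentiable ℂ f)
    (hf0 : ∀ ξ, f ξ ≠ 0) (p : ℝ × ℝ) :
    ∃ Dp Dm, HasWirtingerDerivAt (projOf f) Dp Dm p ∧
      Dp * projOf f p = Dp ∧ projOf f p * Dp = 0 ∧
      Dm * projOf f p = 0 ∧ projOf f p * Dm = Dm := by
  set u := f (complexCoord p)
  have hu0 : u ≠ 0 := hf0 _
  have hP : projOf f p = lineProjector u := by rw [projOf_eq_lineProjector_comp]
  have hid : IsIdempotentElem (lineProjector u) := isIdempotentElem_lineProjector hu0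
  refine ⟨_, _, projOf_eq_lineProjector_comp f ▸
    hasWirtingerDerivAt_lineProjector (hf _).hasDerivAt.hasWirtingerDerivAt_comp hu0,
    ?_, ?_, ?_, ?_⟩ <;> rw [hP]
  · rw [smul_mul_assoc, mul_assoc, vecMulVec_star_mul_lineProjector hu0]
  · rw [mul_smul_comm, ← mul_assoc, hid.mul_one_sub_self, zero_mul, smul_zero]
  · rw [smul_mul_assoc, mul_assoc, hid.one_sub_mul_self, mul_zero, smul_zero]
  · rw [mul_smul_comm, ← mul_assoc, lineProjector_mul_vecMulVec hu0]

section SpectralProblem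

variable {A : Type*} [Ring A] [Algebra ℂ A] {P D : A} {lam : ℂ}

theorem spectral_identity_plus (h1 : lam ≠ 1) (h2 : lam ≠ -1) (hDP : D * P = D) (hPD : P * D = 0) :
    -((2 / (1 - lam)) • D) = ((2 / (1 + lam)) • (D * P - P * D)) * (1 - (2 / (1 - lam)) • P) := by
  have h1' : 1 - lam ≠ 0 := sub_ne_zero.mpr h1.symm
  have h2' : 1 + lam ≠ 0 := fun h => h2 (by linear_combination h)
  rw [hDP, hPD, sub_zero, smul_mul_assoc, mul_sub, mul_one, mul_smul_comm, hDP, smul_sub,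
    smul_smul, ← sub_smul, ← neg_smul]
  congr 1
  field_simp
  ring

theorem spectral_identity_minus (hDP : D * P = 0) (hPD : P * D = D) :
    -((2 / (1 - lam)) • D) = ((2 / (1 - lam)) • (D * P - P * D)) * (1 - (2 / (1 - lam)) • P) := by
  rw [hDP, hPD, zero_sub, smul_mul_assoc, neg_mul, mul_sub, mul_one, mul_smul_comm, hDP,
    smul_zero, sub_zero, smul_neg]

end SpectralProblem

/-- For the projector `P` associated to a nowhere-vanishing holomorphic `f : ℂ → ℂᴺ` and
`λ ≠ ±1`, with `U¹ = (2/(1+λ))[∂₊P, P]` and `U² = (2/(1−λ))[∂₋P, P]`, the wave function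
`Φ = I − (2/(1−λ))·P` satisfies the linear spectral problem `∂₊Φ = U¹·Φ`, `∂₋Φ = U²·Φ`. -/
theorem wave_function_solves_LSP {N : ℕ} (f : ℂ → (Fin N → ℂ))
    (hf : Differentiable ℂ f) (hf0 : ∀ ξ, f ξ ≠ 0)
    (P : ℝ × ℝ → Matrix (Fin N) (Fin N) ℂ) (hPdef : P = projOf f)
    (lam : ℂ) (h1 : lam ≠ 1) (h2 : lam ≠ -1)
    (U1 U2 Phi : ℝ × ℝ → Matrix (Fin N) (Fin N) ℂ)
    (hU1 : U1 = fun p => (2 / (1 + lam)) • (dp P p * P p - P p * dp P p))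
    (hU2 : U2 = fun p => (2 / (1 - lam)) • (dm P p * P p - P p * dm P p))
    (hPhi : Phi = fun p => (1 : Matrix (Fin N) (Fin N) ℂ) - (2 / (1 - lam)) • P p) :
    ∀ p, dp Phi p = U1 p * Phi p ∧ dm Phi p = U2 p * Phi p := by
  subst hPdef hU1 hU2 hPhi
  intro p
  obtain ⟨Dp, Dm, hP, hDpP, hPDp, hDmP, hPDm⟩ := exists_hasWirtingerDerivAt_projOf hf hf0 p
  have hΦ := (hP.const_smul (2 / (1 - lam))).const_sub 1
  constructor
  · simp only [hΦ.dp_eq, hP.dp_eq]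
    exact spectral_identity_plus h1 h2 hDpP hPDp
  · simp only [hΦ.dm_eq, hP.dm_eq]
    exact spectral_identity_minus hDmP hPDm
end
end

section
/- Let P, P₁, …, P_k ∈ Matrix (Fin N) (Fin N) ℂ satisfy P² = P, Pⱼ² = Pⱼ for all j, Pᵢ·Pⱼ = 0 for i ≠ j, and P·Pⱼ = Pⱼ·P = 0 for all j, and let Q = P₁ + ⋯ + P_k. Then for every λ ∈ ℂ with λ ≠ ±1, the matrices Φ = I + (4λ/(1−λ)²)·Q − (2/(1−λ))·P and Ψ = I − (4λ/(1+λ)²)·Q − (2/(1+λ))·P are mutual inverses: Φ·Ψ = Ψ·Φ = I. -/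
open Matrix

noncomputable section

/-- For mutually orthogonal idempotents `P, P₁, …, P_k` with `Q = P₁ + ⋯ + P_k` and `λ ≠ ±1`,
the matrices `Φ = I + (4λ/(1−λ)²)·Q − (2/(1−λ))·P` and `Ψ = I − (4λ/(1+λ)²)·Q − (2/(1+λ))·P`
are mutual inverses. -/
theorem wave_function_inverse {N k : ℕ}
    (P : Matrix (Fin N) (Fin N) ℂ) (Pj : Fin k → Matrix (Fin N) (Fin N) ℂ)
    (hP : P * P = P)
    (hPj : ∀ j, Pj j * Pj j = Pj j)
    (horth : ∀ i j, i ≠ j → Pj i * Pj j = 0)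
    (hPPj : ∀ j, P * Pj j = 0)
    (hPjP : ∀ j, Pj j * P = 0)
    (Q : Matrix (Fin N) (Fin N) ℂ) (hQ : Q = ∑ j, Pj j)
    (lam : ℂ) (h1 : lam ≠ 1) (h2 : lam ≠ -1)
    (Phi Psi : Matrix (Fin N) (Fin N) ℂ)
    (hPhi : Phi = 1 + (4 * lam / (1 - lam) ^ 2) • Q - (2 / (1 - lam)) • P)
    (hPsi : Psi = 1 - (4 * lam / (1 + lam) ^ 2) • Q - (2 / (1 + lam)) • P) :
    Phi * Psi = 1 ∧ Psi * Phi = 1 := by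
  have hm1 : (1 : ℂ) - lam ≠ 0 := sub_ne_zero.mpr (Ne.symm h1)
  have hp1 : (1 : ℂ) + lam ≠ 0 := by
    intro h
    apply h2
    linear_combination h
  have hQQ : Q * Q = Q := by
    subst hQ
    rw [Finset.sum_mul_sum]
    rw [Finset.sum_congr rfl (fun i _ => Finset.sum_eq_single i
      (fun j _ hji => horth i j (Ne.symm hji)) (by simp))]
    simp [hPj]
  have hPQ : P * Q = 0 := by
    subst hQ
    simp [Matrix.mul_sum, hPPj]
  have hQP : Q * P = 0 := by
    subst hQ
    simp [Matrix.sum_mul, hPjP]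
  have key : ∀ a b c d : ℂ, a - c - a * c = 0 → -b - d + b * d = 0 →
      (1 + a • Q - b • P) * (1 - c • Q - d • P) = 1 := by
    intro a b c d hac hbd
    have expand : (1 + a • Q - b • P) * (1 - c • Q - d • P)
        = 1 + (a - c - a * c) • Q + (-b - d + b * d) • P := by
      simp only [mul_sub, sub_mul, add_mul, mul_add, one_mul, mul_one,
        Matrix.smul_mul, Matrix.mul_smul, smul_smul, hQQ, hPQ, hQP, hP,
        smul_zero, sub_smul, add_smul, neg_smul]
      module
    rw [expand, hac, hbd]
    simp
  constructor
  · rw [hPhi, hPsi]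
    apply key
    · field_simp
      ring
    · field_simp
      ring
  · have := key (-(4 * lam / (1 + lam) ^ 2)) (2 / (1 + lam))
        (-(4 * lam / (1 - lam) ^ 2)) (2 / (1 - lam)) (by field_simp; ring) (by field_simp; ring)
    calc Psi * Phi = (1 + (-(4 * lam / (1 + lam) ^ 2)) • Q - (2 / (1 + lam)) • P) *
        (1 - (-(4 * lam / (1 - lam) ^ 2)) • Q - (2 / (1 - lam)) • P) := by
          rw [hPhi, hPsi]; simp [neg_smul, sub_eq_add_neg]
      _ = 1 := this
end
end

section
/- Let P, P₁, …, P_k ∈ Matrix (Fin N) (Fin N) ℂ satisfy P² = P, Pⱼ² = Pⱼ for all j, Pᵢ·Pⱼ = 0 for i ≠ j, and P·Pⱼ = Pⱼ·P = 0 for all j, and let Q = P₁ + ⋯ + P_k. For λ ∈ ℂ with λ ≠ ±1 define Φ(λ) = I + (4λ/(1−λ)²)·Q − (2/(1−λ))·P, whose inverse is Φ(λ)⁻¹ = I − (4λ/(1+λ)²)·Q − (2/(1+λ))·P. Then Φ(λ)⁻¹ · (dΦ/dλ)(λ) = (2/(1−λ²))·(P + 2Q), where dΦ/dλ = (4(1+λ)/(1−λ)³)·Q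 − (2/(1−λ)²)·P. Hence the Sym–Tafel immersion function coincides, up to a multiplicative factor and an additive multiple of the identity, with the integrated Generalized Weierstrass immersion F_k = −i(P_k + 2Σⱼ₌₀^{k−1}Pⱼ − ((1+2k)/N)·I). -/
open Matrix

noncomputable section

/-- For mutually orthogonal idempotents `P, P₁, …, P_k` with `Q = P₁ + ⋯ + P_k` and `λ ≠ ±1`,
with `Φ(λ) = I + (4λ/(1−λ)²)·Q − (2/(1−λ))·P`, inverse
`Φ(λ)⁻¹ = I − (4λ/(1+λ)²)·Q − (2/(1+λ))·P` and derivative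
`dΦ/dλ = (4(1+λ)/(1−λ)³)·Q − (2/(1−λ)²)·P`, one has
`Φ(λ)⁻¹ · (dΦ/dλ) = (2/(1−λ²))·(P + 2Q)`; hence the Sym–Tafel immersion coincides, up to a
multiplicative factor and an additive multiple of the identity, with the integrated
Generalized Weierstrass immersion `F_k = −i(P + 2Q − ((1+2k)/N)·I)`. -/
theorem Sym_Tafel_equals_Weierstrass {N k : ℕ}
    (P : Matrix (Fin N) (Fin N) ℂ) (Pj : Fin k → Matrix (Fin N) (Fin N) ℂ)
    (hP : P * P = P)
    (hPj : ∀ j, Pj j * Pj j = Pj j)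
    (horth : ∀ i j, i ≠ j → Pj i * Pj j = 0)
    (hPPj : ∀ j, P * Pj j = 0)
    (hPjP : ∀ j, Pj j * P = 0)
    (Q : Matrix (Fin N) (Fin N) ℂ) (hQ : Q = ∑ j, Pj j)
    (lam : ℂ) (h1 : lam ≠ 1) (h2 : lam ≠ -1)
    (PhiInv dPhi Fk : Matrix (Fin N) (Fin N) ℂ)
    (hPhiInv : PhiInv = 1 - (4 * lam / (1 + lam) ^ 2) • Q - (2 / (1 + lam)) • P)
    (hdPhi : dPhi = (4 * (1 + lam) / (1 - lam) ^ 3) • Q - (2 / (1 - lam) ^ 2) • P)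
    (hFk : Fk = (-Complex.I) • (P + (2 : ℂ) • Q - (((1 : ℂ) + 2 * k) / N) • 1)) :
    PhiInv * dPhi = (2 / (1 - lam ^ 2)) • (P + (2 : ℂ) • Q)
    ∧ ∃ α β : ℂ, PhiInv * dPhi = α • Fk + β • 1 := by
  have hm1 : (1 : ℂ) - lam ≠ 0 := fun h => h1 (by linear_combination -h)
  have hp1 : (1 : ℂ) + lam ≠ 0 := fun h => h2 (by linear_combination h)
  have hsq : (1 : ℂ) - lam ^ 2 ≠ 0 := by
    have := mul_ne_zero hm1 hp1
    intro h; exact this (by linear_combination h)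
  have hPQ : P * Q = 0 := by simp [hQ, Finset.mul_sum, hPPj]
  have hQP : Q * P = 0 := by simp [hQ, Finset.sum_mul, hPjP]
  have hQQ : Q * Q = Q := by
    rw [hQ, Finset.sum_mul_sum]
    rw [Finset.sum_congr rfl (fun i _ => Finset.sum_eq_single i
      (fun j _ hji => horth i j (Ne.symm hji)) (by simp))]
    exact Finset.sum_congr rfl fun i _ => hPj i
  have key : PhiInv * dPhi =
      ((4 * (1 + lam) / (1 - lam) ^ 3) - (4 * lam / (1 + lam) ^ 2) * (4 * (1 + lam) / (1 - lam) ^ 3)) • Q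
      + ((2 / (1 + lam)) * (2 / (1 - lam) ^ 2) - (2 / (1 - lam) ^ 2)) • P := by
    rw [hPhiInv, hdPhi]
    simp only [mul_sub, sub_mul, one_mul, smul_mul_assoc, mul_smul_comm, hQQ, hPQ, hQP, hP,
      smul_smul, smul_zero]
    module
  have c1 : (4 * (1 + lam) / (1 - lam) ^ 3) - (4 * lam / (1 + lam) ^ 2) * (4 * (1 + lam) / (1 - lam) ^ 3)
      = 2 / (1 - lam ^ 2) * 2 := by
    field_simp
    ring
  have c2 : (2 / (1 + lam)) * (2 / (1 - lam) ^ 2) - (2 / (1 - lam) ^ 2) = 2 / (1 - lam ^ 2) := by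
    field_simp
    ring
  have main : PhiInv * dPhi = (2 / (1 - lam ^ 2)) • (P + (2 : ℂ) • Q) := by
    rw [key, c1, c2]
    module
  refine ⟨main, Complex.I * (2 / (1 - lam ^ 2)), (2 / (1 - lam ^ 2)) * (((1 : ℂ) + 2 * k) / N), ?_⟩
  rw [main, hFk]
  rw [smul_smul]
  have : Complex.I * (2 / (1 - lam ^ 2)) * -Complex.I = 2 / (1 - lam ^ 2) := by
    linear_combination (-(2 / (1 - lam ^ 2))) * Complex.I_sq
  rw [this]
  rw [smul_sub, smul_smul]
  module
end
end

section
/- Let P₀, P₁, …, P_k ∈ Matrix (Fin N) (Fin N) ℂ satisfy Pⱼ² = Pⱼ for all j and Pᵢ·Pⱼ = 0 for all i ≠ j. Set c = (1+2k)/N and F_k = −i·(P_k + 2·(P₀ + ⋯ + P_{k−1}) − c·I). Then the projector P_k can be recovered from the immersion function F_k by the inverse formula P_k = F_k² − 2i·(c − 1)·F_k − c·(c − 2)·I. -/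
open Matrix

noncomputable section

/-- For mutually orthogonal idempotents `P₀, …, P_k`, with `c = (1+2k)/N` and
`F_k = −i·(P_k + 2·(P₀ + ⋯ + P_{k−1}) − c·I)`, the projector `P_k` is recovered by the inverse
formula `P_k = F_k² − 2i·(c − 1)·F_k − c·(c − 2)·I`. -/
theorem projector_from_immersion {N k : ℕ}
    (P : Fin (k + 1) → Matrix (Fin N) (Fin N) ℂ)
    (hP : ∀ j, P j * P j = P j)
    (horth : ∀ i j, i ≠ j → P i * P j = 0)
    (c : ℂ) (hc : c = ((1 : ℂ) + 2 * k) / N)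
    (Fk : Matrix (Fin N) (Fin N) ℂ)
    (hFk : Fk = (-Complex.I) •
      (P (Fin.last k) + (2 : ℂ) • (∑ j : Fin k, P j.castSucc) - c • 1)) :
    P (Fin.last k) = Fk ^ 2 - (2 * Complex.I * (c - 1)) • Fk - (c * (c - 2)) • 1 := by
  subst hFk
  set Q := P (Fin.last k) with hQ
  set S := ∑ j : Fin k, P j.castSucc with hS
  have hQQ : Q * Q = Q := hP _
  have hQS : Q * S = 0 := by
    rw [hS, Finset.mul_sum]
    exact Finset.sum_eq_zero fun j _ =>
      horth _ _ (Fin.castSucc_lt_last j).ne'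
  have hSQ : S * Q = 0 := by
    rw [hS, Finset.sum_mul]
    exact Finset.sum_eq_zero fun j _ =>
      horth _ _ (Fin.castSucc_lt_last j).ne
  have hSS : S * S = S := by
    rw [hS, Finset.sum_mul]
    refine Finset.sum_congr rfl fun i _ => ?_
    rw [Finset.mul_sum, Finset.sum_eq_single i]
    · exact hP _
    · intro j _ hij
      exact horth _ _ fun h => hij (Fin.castSucc_injective _ h).symm
    · intro h; exact absurd (Finset.mem_univ i) h
  have hI : Complex.I * Complex.I = -1 := Complex.I_mul_I
  simp only [sq, smul_mul_assoc, mul_smul_comm, mul_add, add_mul, sub_mul, mul_sub,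
    hQQ, hQS, hSQ, hSS, mul_one, one_mul, smul_smul, smul_zero, smul_add, smul_sub,
    neg_mul, mul_neg, neg_neg, hI]
  match_scalars <;> (ring_nf; try simp [Complex.I_sq]; try ring)
end
end

section
/- Let Λ ⊆ ℂ be open and let U¹, U², Φ : ℝ² × Λ → Matrix (Fin N) (Fin N) ℂ be twice continuously differentiable with Φ(ξ₁, ξ₂, λ) invertible everywhere, and suppose the linear spectral problem ∂Φ/∂ξ₁ = U¹·Φ and ∂Φ/∂ξ₂ = U²·Φ holds for all (ξ₁, ξ₂, λ). Then the Sym–Tafel immersion F^{ST} := Φ⁻¹·(∂Φ/∂λ) satisfies ∂F^{ST}/∂ξ₁ = Φ⁻¹·(∂U¹/∂λ)·Φ and ∂F^{ST}/∂ξ₂ = Φ⁻¹·(∂U²/∂λ)·Φ. -/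
open Matrix

noncomputable section

attribute [local instance] Matrix.normedAddCommGroup Matrix.normedSpace

/-!
Differentiating `F = Φ⁻¹ ∂_λΦ` along `ξᵢ` gives `-Φ⁻¹ (∂ᵢΦ) Φ⁻¹ ∂_λΦ + Φ⁻¹ ∂ᵢ∂_λΦ`. Mixed second
derivatives of a `C²` map commute, so `∂ᵢ∂_λΦ = ∂_λ(UⁱΦ) = (∂_λUⁱ) Φ + Uⁱ ∂_λΦ`; after
substituting `∂ᵢΦ = UⁱΦ` the two terms containing `∂_λΦ` cancel, leaving `Φ⁻¹ (∂_λUⁱ) Φ`.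
-/

open Filter Topology

theorem ContDiffAt.fderiv_fderiv_apply_comm {𝕜 : Type*} [RCLike 𝕜] {E F : Type*}
    [NormedAddCommGroup E] [NormedSpace 𝕜 E] [NormedAddCommGroup F] [NormedSpace 𝕜 F]
    {f : E → F} {x : E} (hf : ContDiffAt 𝕜 2 f x) (v w : E) :
    fderiv 𝕜 (fun y => fderiv 𝕜 f y w) x v = fderiv 𝕜 (fun y => fderiv 𝕜 f y v) x w := by
  have hf' : DifferentiableAt 𝕜 (fderiv 𝕜 f) x :=
    (hf.fderiv_right (m := 1) le_rfl).differentiableAt one_ne_zero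
  rw [fderiv_clm_apply hf' (differentiableAt_const w),
    fderiv_clm_apply hf' (differentiableAt_const v)]
  simpa using hf.isSymmSndFDerivAt (by simp) v w

section MatrixCalculus

/- The entrywise sup norm is not submultiplicative, but it induces the same topology as the
`linftyOp` Banach-algebra norm, and derivatives only depend on the topology: switching to the
latter makes the product and inverse rules of normed algebras available. -/

variable {𝕜 : Type*} [NontriviallyNormedField 𝕜] {E : Type*} [NormedAddCommGroup E]
  [NormedSpace 𝕜 E] {n : Type*} [Fintype n] [DecidableEq n] {α : Type*} [NormedCommRing α]
  [NormedAlgebra 𝕜 α] {f g : E → Matrix n n α} {x : E}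

theorem fderiv_matrix_mul_apply_s16 (hf : DifferentiableAt 𝕜 f x) (hg : DifferentiableAt 𝕜 g x)
    (v : E) :
    fderiv 𝕜 (fun y => f y * g y) x v = f x * fderiv 𝕜 g x v + fderiv 𝕜 f x v * g x := by
  let _ := Matrix.linftyOpNormedRing (n := n) (α := α)
  let _ := Matrix.linftyOpNormedAlgebra (n := n) (α := α) (R := 𝕜)
  exact congr($(fderiv_fun_mul' (𝕜 := 𝕜) hf hg) v)

variable [CompleteSpace α]

theorem Matrix.linftyOp_hasSummableGeomSeries :
    @HasSummableGeomSeries (Matrix n n α) Matrix.linftyOpNormedRing :=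
  @instHasSummableGeomSeriesOfCompleteSpace _ Matrix.linftyOpNormedRing
    (inferInstanceAs (CompleteSpace (n → n → α)))

theorem DifferentiableAt.matrix_inv (hf : DifferentiableAt 𝕜 f x) (hx : IsUnit (f x)) :
    DifferentiableAt 𝕜 (fun y => (f y)⁻¹) x := by
  let _ := Matrix.linftyOpNormedRing (n := n) (α := α)
  let _ := Matrix.linftyOpNormedAlgebra (n := n) (α := α) (R := 𝕜)
  have := Matrix.linftyOp_hasSummableGeomSeries (n := n) (α := α)
  simp_rw [nonsing_inv_eq_ringInverse]
  exact hf.inverse hx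

theorem fderiv_matrix_inv_apply (hf : DifferentiableAt 𝕜 f x) (hx : IsUnit (f x)) (v : E) :
    fderiv 𝕜 (fun y => (f y)⁻¹) x v = -((f x)⁻¹ * fderiv 𝕜 f x v * (f x)⁻¹) := by
  let _ := Matrix.linftyOpNormedRing (n := n) (α := α)
  let _ := Matrix.linftyOpNormedAlgebra (n := n) (α := α) (R := 𝕜)
  have := Matrix.linftyOp_hasSummableGeomSeries (n := n) (α := α)
  obtain ⟨u, hu⟩ := hx
  have h := (hu ▸ hasFDerivAt_ringInverse (𝕜 := 𝕜) u).comp x hf.hasFDerivAt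
  simp_rw [nonsing_inv_eq_ringInverse, ← hu, Ring.inverse_unit]
  exact congr($(h.fderiv) v).trans rfl

end MatrixCalculus

section SymTafel

variable (𝕜 : Type*) [RCLike 𝕜] {E : Type*} [NormedAddCommGroup E] [NormedSpace 𝕜 E]
  {n : Type*} [Fintype n] [DecidableEq n] {α : Type*} [NormedCommRing α] [NormedAlgebra 𝕜 α]

def symTafelImmersion (Φ : E → Matrix n n α) (w : E) : E → Matrix n n α :=
  fun q => (Φ q)⁻¹ * fderiv 𝕜 Φ q w

variable {𝕜} [CompleteSpace α]

theorem fderiv_symTafelImmersion_apply {Φ U : E → Matrix n n α} {p v : E}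
    (hΦ : ContDiffAt 𝕜 2 Φ p) (hU : DifferentiableAt 𝕜 U p) (hΦp : IsUnit (Φ p))
    (hlsp : (fun q => fderiv 𝕜 Φ q v) =ᶠ[𝓝 p] fun q => U q * Φ q) (w : E) :
    fderiv 𝕜 (symTafelImmersion 𝕜 Φ w) p v = (Φ p)⁻¹ * fderiv 𝕜 U p w * Φ p := by
  have hΦd : DifferentiableAt 𝕜 Φ p := hΦ.differentiableAt two_ne_zero
  have hΦwd : DifferentiableAt 𝕜 (fun q => fderiv 𝕜 Φ q w) p :=
    ((hΦ.fderiv_right (m := 1) le_rfl).differentiableAt one_ne_zero).clm_apply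
      (differentiableAt_const w)
  have hmixed : fderiv 𝕜 (fun q => fderiv 𝕜 Φ q w) p v
      = U p * fderiv 𝕜 Φ p w + fderiv 𝕜 U p w * Φ p :=
    calc fderiv 𝕜 (fun q => fderiv 𝕜 Φ q w) p v
        = fderiv 𝕜 (fun q => fderiv 𝕜 Φ q v) p w := hΦ.fderiv_fderiv_apply_comm v w
      _ = fderiv 𝕜 (fun q => U q * Φ q) p w := congr($(hlsp.fderiv_eq) w)
      _ = U p * fderiv 𝕜 Φ p w + fderiv 𝕜 U p w * Φ p := fderiv_matrix_mul_apply_s16 hU hΦd w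
  have hΦv : fderiv 𝕜 Φ p v = U p * Φ p := hlsp.eq_of_nhds
  have hcancel : Φ p * (Φ p)⁻¹ = 1 := mul_nonsing_inv _ ((isUnit_iff_isUnit_det _).mp hΦp)
  unfold symTafelImmersion
  rw [fderiv_matrix_mul_apply_s16 (hΦd.matrix_inv hΦp) hΦwd, hmixed,
    fderiv_matrix_inv_apply hΦd hΦp, hΦv, mul_assoc _ (U p * Φ p), mul_assoc (U p), hcancel,
    mul_one]
  noncomm_ring

end SymTafel

/-- If `Φ(ξ₁, ξ₂, λ)` is invertible and solves the linear spectral problem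
`∂Φ/∂ξ₁ = U¹·Φ`, `∂Φ/∂ξ₂ = U²·Φ` for all `(ξ₁, ξ₂)` and `λ` in an open set `Λ`, then the
Sym–Tafel immersion `F^{ST} = Φ⁻¹·(∂Φ/∂λ)` has tangent vectors
`∂F^{ST}/∂ξᵢ = Φ⁻¹·(∂Uⁱ/∂λ)·Φ`. -/
theorem Sym_Tafel_tangent_vectors {N : ℕ} (Λ : Set ℂ) (hΛ : IsOpen Λ)
    (U1 U2 Phi : ℝ × ℝ × ℂ → Matrix (Fin N) (Fin N) ℂ)
    (S : Set (ℝ × ℝ × ℂ)) (hS : S = {p : ℝ × ℝ × ℂ | p.2.2 ∈ Λ})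
    (hU1 : ContDiffOn ℝ 2 U1 S) (hU2 : ContDiffOn ℝ 2 U2 S)
    (hPhi : ContDiffOn ℝ 2 Phi S)
    (hinv : ∀ p ∈ S, IsUnit (Phi p))
    (hlsp1 : ∀ p ∈ S, fderiv ℝ Phi p (1, 0, 0) = U1 p * Phi p)
    (hlsp2 : ∀ p ∈ S, fderiv ℝ Phi p (0, 1, 0) = U2 p * Phi p)
    (F : ℝ × ℝ × ℂ → Matrix (Fin N) (Fin N) ℂ)
    (hF : F = fun p => (Phi p)⁻¹ * fderiv ℝ Phi p (0, 0, 1)) :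
    ∀ p ∈ S, fderiv ℝ F p (1, 0, 0) = (Phi p)⁻¹ * fderiv ℝ U1 p (0, 0, 1) * Phi p
      ∧ fderiv ℝ F p (0, 1, 0) = (Phi p)⁻¹ * fderiv ℝ U2 p (0, 0, 1) * Phi p := by
  subst hF
  intro p hp
  have hpS : S ∈ 𝓝 p := (hS ▸ hΛ.preimage (by fun_prop) : IsOpen S).mem_nhds hp
  exact ⟨fderiv_symTafelImmersion_apply (hPhi.contDiffAt hpS)
      ((hU1.contDiffAt hpS).differentiableAt two_ne_zero) (hinv p hp)
      (eventuallyEq_of_mem hpS hlsp1) _,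
    fderiv_symTafelImmersion_apply (hPhi.contDiffAt hpS)
      ((hU2.contDiffAt hpS).differentiableAt two_ne_zero) (hinv p hp)
      (eventuallyEq_of_mem hpS hlsp2) _⟩
end
end

section
/- Let U¹, U² : ℝ² → Matrix (Fin N) (Fin N) ℂ be continuously differentiable satisfying the zero-curvature condition ∂U¹/∂ξ₂ − ∂U²/∂ξ₁ + [U¹, U²] = 0, and let Φ : ℝ² → Matrix (Fin N) (Fin N) ℂ be continuously differentiable, everywhere invertible, with ∂Φ/∂ξ₁ = U¹·Φ and ∂Φ/∂ξ₂ = U²·Φ. Then the surface F := Φ⁻¹·(ξ₁·U¹ + ξ₂·U²)·Φ associated with the scaling symmetry of the zero-curvature condition satisfies ∂F/∂ξ₁ = Φ⁻¹·(U¹ + ξ₁·∂U¹/∂ξ₁ + ξ₂·∂U¹/∂ξ₂)·Φ and ∂F/∂ξ₂ = Φ⁻¹·(ξ₁·∂U²/∂ξ₁ + U² + ξ₂·∂U²/∂ξ₂)·Φ. -/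
/-! Conjugating by a solution `Φ` of `∂ᵢΦ = UᵢΦ` turns differentiation into the gauge-covariant
derivative: `∂ᵢ(Φ⁻¹ S Φ) = Φ⁻¹ (∂ᵢS + [S, Uᵢ]) Φ`. For the scaling gauge `S = ξ₁U₁ + ξ₂U₂`,
the zero-curvature condition `∂₁U₂ = ∂₂U₁ + [U₁, U₂]` exactly cancels the commutator term, leaving
the infinitesimal scaling `Uᵢ + ξ₁∂₁Uᵢ + ξ₂∂₂Uᵢ`. -/

section GaugeConjugation

variable {𝕜 E R : Type*} [NontriviallyNormedField 𝕜] [NormedAddCommGroup E] [NormedSpace 𝕜 E]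
  [NormedRing R] [NormedAlgebra 𝕜 R] [HasSummableGeomSeries R] {Φ S : E → R} {x : E}

theorem fderiv_ringInverse_apply (hΦ : DifferentiableAt 𝕜 Φ x) (hx : IsUnit (Φ x)) (v : E) :
    fderiv 𝕜 (fun y => Ring.inverse (Φ y)) x v
      = -(Ring.inverse (Φ x) * fderiv 𝕜 Φ x v * Ring.inverse (Φ x)) := by
  have hinv : HasFDerivAt Ring.inverse
      (-ContinuousLinearMap.mulLeftRight 𝕜 R (Ring.inverse (Φ x)) (Ring.inverse (Φ x))) (Φ x) := by
    obtain ⟨u, hu⟩ := hx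
    rw [← hu, Ring.inverse_unit]
    exact hasFDerivAt_ringInverse u
  have hcomp : HasFDerivAt (fun y => Ring.inverse (Φ y)) _ x := hinv.comp x hΦ.hasFDerivAt
  simp [hcomp.fderiv, mul_assoc]

theorem fderiv_inverse_mul_mul_apply_of_fderiv_eq_mul
    (hΦ : DifferentiableAt 𝕜 Φ x) (hS : DifferentiableAt 𝕜 S x) (hx : IsUnit (Φ x))
    {v : E} {A : R} (hΦv : fderiv 𝕜 Φ x v = A * Φ x) :
    fderiv 𝕜 (fun y => Ring.inverse (Φ y) * S y * Φ y) x v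
      = Ring.inverse (Φ x) * (fderiv 𝕜 S x v + (S x * A - A * S x)) * Φ x := by
  have hΦinv : DifferentiableAt 𝕜 (fun y => Ring.inverse (Φ y)) x := hΦ.inverse hx
  have hcancel : Φ x * Ring.inverse (Φ x) = 1 := Ring.mul_inverse_cancel _ hx
  rw [((hΦinv.hasFDerivAt.fun_mul' hS.hasFDerivAt).fun_mul' hΦ.hasFDerivAt).fderiv]
  simp only [add_apply, smul_apply, smul_eq_mul,
    MulOpposite.smul_eq_mul_unop, MulOpposite.unop_op, fderiv_ringInverse_apply hΦ hx, hΦv]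
  simp only [mul_assoc, hcancel, mul_one]
  noncomm_ring

end GaugeConjugation

section ScalingGauge

variable {𝕜 : Type*} [NontriviallyNormedField 𝕜]

def scalingGauge {M : Type*} [SMul 𝕜 M] [Add M] (U₁ U₂ : 𝕜 × 𝕜 → M) (q : 𝕜 × 𝕜) : M :=
  q.1 • U₁ q + q.2 • U₂ q

theorem fderiv_scalingGauge_apply {M : Type*} [NormedAddCommGroup M] [NormedSpace 𝕜 M]
    {U₁ U₂ : 𝕜 × 𝕜 → M} {p : 𝕜 × 𝕜} (h₁ : DifferentiableAt 𝕜 U₁ p)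
    (h₂ : DifferentiableAt 𝕜 U₂ p) (v : 𝕜 × 𝕜) :
    fderiv 𝕜 (scalingGauge U₁ U₂) p v
      = v.1 • U₁ p + v.2 • U₂ p + (p.1 • fderiv 𝕜 U₁ p v + p.2 • fderiv 𝕜 U₂ p v) := by
  have hS : HasFDerivAt (scalingGauge U₁ U₂) _ p :=
    (hasFDerivAt_fst.smul h₁.hasFDerivAt).add (hasFDerivAt_snd.smul h₂.hasFDerivAt)
  rw [hS.fderiv]
  simp only [add_apply, smul_apply,
    ContinuousLinearMap.smulRight_apply, ContinuousLinearMap.coe_fst', ContinuousLinearMap.coe_snd']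
  abel

variable {R : Type*} [NormedRing R] [NormedAlgebra 𝕜 R] {U₁ U₂ : 𝕜 × 𝕜 → R} {p : 𝕜 × 𝕜}

theorem fderiv_scalingGauge_fst_add_commutator (h₁ : DifferentiableAt 𝕜 U₁ p)
    (h₂ : DifferentiableAt 𝕜 U₂ p)
    (hZC : fderiv 𝕜 U₁ p (0, 1) - fderiv 𝕜 U₂ p (1, 0) + (U₁ p * U₂ p - U₂ p * U₁ p) = 0) :
    fderiv 𝕜 (scalingGauge U₁ U₂) p (1, 0)
        + (scalingGauge U₁ U₂ p * U₁ p - U₁ p * scalingGauge U₁ U₂ p)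
      = U₁ p + p.1 • fderiv 𝕜 U₁ p (1, 0) + p.2 • fderiv 𝕜 U₁ p (0, 1) := by
  rw [fderiv_scalingGauge_apply h₁ h₂]
  simp only [scalingGauge, add_mul, mul_add, smul_mul_assoc, mul_smul_comm]
  linear_combination (norm := module) (-p.2) • hZC

theorem fderiv_scalingGauge_snd_add_commutator (h₁ : DifferentiableAt 𝕜 U₁ p)
    (h₂ : DifferentiableAt 𝕜 U₂ p)
    (hZC : fderiv 𝕜 U₁ p (0, 1) - fderiv 𝕜 U₂ p (1, 0) + (U₁ p * U₂ p - U₂ p * U₁ p) = 0) :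
    fderiv 𝕜 (scalingGauge U₁ U₂) p (0, 1)
        + (scalingGauge U₁ U₂ p * U₂ p - U₂ p * scalingGauge U₁ U₂ p)
      = p.1 • fderiv 𝕜 U₂ p (1, 0) + U₂ p + p.2 • fderiv 𝕜 U₂ p (0, 1) := by
  rw [fderiv_scalingGauge_apply h₁ h₂]
  simp only [scalingGauge, add_mul, mul_add, smul_mul_assoc, mul_smul_comm]
  linear_combination (norm := module) p.1 • hZC

theorem fderiv_inverse_mul_scalingGauge_mul [HasSummableGeomSeries R] {Φ : 𝕜 × 𝕜 → R}
    (h₁ : DifferentiableAt 𝕜 U₁ p) (h₂ : DifferentiableAt 𝕜 U₂ p) (hΦ : DifferentiableAt 𝕜 Φ p)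
    (hZC : fderiv 𝕜 U₁ p (0, 1) - fderiv 𝕜 U₂ p (1, 0) + (U₁ p * U₂ p - U₂ p * U₁ p) = 0)
    (hp : IsUnit (Φ p)) (hΦ₁ : fderiv 𝕜 Φ p (1, 0) = U₁ p * Φ p)
    (hΦ₂ : fderiv 𝕜 Φ p (0, 1) = U₂ p * Φ p) :
    fderiv 𝕜 (fun q => Ring.inverse (Φ q) * scalingGauge U₁ U₂ q * Φ q) p (1, 0)
        = Ring.inverse (Φ p) * (U₁ p + p.1 • fderiv 𝕜 U₁ p (1, 0)
            + p.2 • fderiv 𝕜 U₁ p (0, 1)) * Φ p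
      ∧ fderiv 𝕜 (fun q => Ring.inverse (Φ q) * scalingGauge U₁ U₂ q * Φ q) p (0, 1)
        = Ring.inverse (Φ p) * (p.1 • fderiv 𝕜 U₂ p (1, 0) + U₂ p
            + p.2 • fderiv 𝕜 U₂ p (0, 1)) * Φ p := by
  have hS : DifferentiableAt 𝕜 (scalingGauge U₁ U₂) p :=
    (differentiableAt_fst.smul h₁).add (differentiableAt_snd.smul h₂)
  rw [fderiv_inverse_mul_mul_apply_of_fderiv_eq_mul hΦ hS hp hΦ₁,
    fderiv_inverse_mul_mul_apply_of_fderiv_eq_mul hΦ hS hp hΦ₂,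
    fderiv_scalingGauge_fst_add_commutator h₁ h₂ hZC,
    fderiv_scalingGauge_snd_add_commutator h₁ h₂ hZC]
  exact ⟨rfl, rfl⟩

end ScalingGauge

open Matrix

attribute [local instance] Matrix.normedAddCommGroup Matrix.normedSpace

/-- If `U¹, U²` satisfy the zero-curvature condition `∂₂U¹ − ∂₁U² + [U¹, U²] = 0` and `Φ` is an
invertible solution of the linear spectral problem `∂₁Φ = U¹Φ`, `∂₂Φ = U²Φ`, then the surface
`F = Φ⁻¹·(ξ₁U¹ + ξ₂U²)·Φ` associated with the scaling symmetry satisfies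
`∂₁F = Φ⁻¹·(U¹ + ξ₁∂₁U¹ + ξ₂∂₂U¹)·Φ` and `∂₂F = Φ⁻¹·(ξ₁∂₁U² + U² + ξ₂∂₂U²)·Φ`. -/
theorem scaling_symmetry_surface {N : ℕ}
    (U1 U2 Phi : ℝ × ℝ → Matrix (Fin N) (Fin N) ℂ)
    (hU1 : ContDiff ℝ 1 U1) (hU2 : ContDiff ℝ 1 U2)
    (hPhi : ContDiff ℝ 1 Phi)
    (hZC : ∀ p, fderiv ℝ U1 p (0, 1) - fderiv ℝ U2 p (1, 0)
      + (U1 p * U2 p - U2 p * U1 p) = 0)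
    (hinv : ∀ p, IsUnit (Phi p))
    (hlsp1 : ∀ p, fderiv ℝ Phi p (1, 0) = U1 p * Phi p)
    (hlsp2 : ∀ p, fderiv ℝ Phi p (0, 1) = U2 p * Phi p)
    (F : ℝ × ℝ → Matrix (Fin N) (Fin N) ℂ)
    (hF : F = fun p => (Phi p)⁻¹ * ((p.1 : ℂ) • U1 p + (p.2 : ℂ) • U2 p) * Phi p) :
    ∀ p, fderiv ℝ F p (1, 0)
        = (Phi p)⁻¹ * (U1 p + (p.1 : ℂ) • fderiv ℝ U1 p (1, 0)
            + (p.2 : ℂ) • fderiv ℝ U1 p (0, 1)) * Phi p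
      ∧ fderiv ℝ F p (0, 1)
        = (Phi p)⁻¹ * ((p.1 : ℂ) • fderiv ℝ U2 p (1, 0) + U2 p
            + (p.2 : ℂ) • fderiv ℝ U2 p (0, 1)) * Phi p := by
  subst hF
  intro p
  have h₁ := hU1.differentiable one_ne_zero p
  have h₂ := hU2.differentiable one_ne_zero p
  have hΦ := hPhi.differentiable one_ne_zero p
  simp only [Complex.coe_smul, nonsing_inv_eq_ringInverse]
  -- The entrywise sup norm is not submultiplicative, but `fderiv` only sees the topology, which
  -- the operator norm shares; under the latter, matrices form a complete normed algebra.
  open scoped Matrix.Norms.Operator in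
  exact fderiv_inverse_mul_scalingGauge_mul h₁ h₂ hΦ (hZC p) (hinv p) (hlsp1 p) (hlsp2 p)
end
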